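/- arXiv:1508.02267 — 6 statements merged into one kernel-verified Lean document; each statement's English description precedes it below -/
import Mathlib

section
/- Let G be a group acting on a field K by field automorphisms, and let U ≤ G be a subgroup such that (a) {g ∈ G | g U g⁻¹ ⊆ U} = U, and (b) for every g ∉ U the index [U : U ∩ gUg⁻¹] is infinite. Let K⟨G/U⟩ be the free K-module on the coset space G/U with the semilinear action σ•(c·[gU]) = (σ•c)·[σgU]. For f ∈ K^U define φ_f : K⟨G/U⟩ → K⟨G/U⟩ by φ_f(c·[gU]) = c·(g•f)·[gU] (well-defined since f is U-fixed). Then f ↦ φ_f is a ring isomorphism from the fixed field K^U onto the ring of K-linear G-equivariant endomorphisms of K⟨G/U⟩; in particular, K⟨G/U⟩ is indecomposable: it is not the direct sum of two nonzero G-stable K-subspaces. -/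
/-- The semilinear action of `σ : G` on the free `K`-module `K⟨G/U⟩`:
`σ • (c·[gU]) = (σ•c)·[σgU]`. -/
noncomputable def cosetAct {K G : Type} [Field K] [Group G] (U : Subgroup G)
    (act : G →* (K ≃+* K)) (σ : G) (x : (G ⧸ U) →₀ K) : (G ⧸ U) →₀ K :=
  Finsupp.mapDomain (fun q : G ⧸ U => σ • q) (x.mapRange (act σ) (map_zero _))

/-- For `f ∈ K^U`, the endomorphism `φ_f` of `K⟨G/U⟩` with
`φ_f (c·[gU]) = c·(g•f)·[gU]`.  (For `f` fixed by `U` the value `g•f` does not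
depend on the representative `g` of the coset `gU`, so using the chosen
representative `Quotient.out q` realizes exactly the intended map.) -/
noncomputable def diagMul {K G : Type} [Field K] [Group G] (U : Subgroup G)
    (act : G →* (K ≃+* K)) (f : K) (x : (G ⧸ U) →₀ K) : (G ⧸ U) →₀ K :=
  x.sum fun q c => Finsupp.single q (c * act q.out f)

/-- The predicate: `ψ` is a `K`-linear `G`-equivariant endomorphism of `K⟨G/U⟩`. -/
def IsEquivEnd {K G : Type} [Field K] [Group G] (U : Subgroup G)
    (act : G →* (K ≃+* K)) (ψ : ((G ⧸ U) →₀ K) → ((G ⧸ U) →₀ K)) : Prop :=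
  (∀ x y, ψ (x + y) = ψ x + ψ y) ∧
  (∀ (c : K) (x), ψ (c • x) = c • ψ x) ∧
  (∀ (σ : G) (x), ψ (cosetAct U act σ x) = cosetAct U act σ (ψ x))

/-!
An equivariant endomorphism `ψ` is determined by `y = ψ [U]`, which is fixed by `U`. The support
of `y` is finite and `U`-stable, while by (b) the `U`-orbit of any coset `gU ≠ U` is infinite,
its stabilizer being `U ∩ gUg⁻¹`. Hence `y = f·[U]` with `f ∈ K^U`, and equivariance forces
`ψ = φ_f`. Indecomposability follows: the projection onto a `G`-stable summand is an idempotent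
equivariant endomorphism, so it is `φ_0` or `φ_1`.
-/

lemma Finsupp.funext_of_map_add {α M N : Type*} [AddZeroClass M] [AddGroup N]
    {ψ φ : (α →₀ M) → N} (hψ : ∀ x y, ψ (x + y) = ψ x + ψ y)
    (hφ : ∀ x y, φ (x + y) = φ x + φ y)
    (h : ∀ a m, ψ (Finsupp.single a m) = φ (Finsupp.single a m)) : ψ = φ :=
  funext <| DFunLike.congr_fun <|
    Finsupp.addHom_ext (f := AddMonoidHom.mk' ψ hψ) (g := AddMonoidHom.mk' φ hφ) h

lemma Submodule.projection_map_comm {R E : Type*} [Ring R] [AddCommGroup E] [Module R E]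
    {P Q : Submodule R E} (h : IsCompl P Q) {T : E → E} (hT : ∀ x y, T (x + y) = T x + T y)
    (hP : ∀ x ∈ P, T x ∈ P) (hQ : ∀ x ∈ Q, T x ∈ Q) (x : E) :
    P.projection Q h (T x) = T (P.projection Q h x) := by
  obtain ⟨p, hp, q, hq, rfl⟩ := Submodule.mem_sup.mp (h.sup_eq_top ▸ Submodule.mem_top (x := x))
  simp only [hT, map_add, projection_apply_of_mem_left h hp,
    projection_apply_of_mem_left h (hP p hp), projection_apply_of_mem_right h hq,
    projection_apply_of_mem_right h (hQ q hq), add_zero]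

lemma MulAction.orbit_mk_infinite_of_relIndex_eq_zero {G : Type*} [Group G] {U : Subgroup G}
    {g : G}
    (hg : (U.map (MulAut.conj g).toMonoidHom).relIndex U = 0) :
    (MulAction.orbit U (g : G ⧸ U)).Infinite := by
  have hconj : MulAction.stabilizer G (g : G ⧸ U) = U.map (MulAut.conj g).toMonoidHom := by
    simpa [MulAction.Quotient.smul_mk] using
      MulAction.stabilizer_smul_eq_stabilizer_map_conj g ((1 : G) : G ⧸ U)
  have hstab : MulAction.stabilizer U (g : G ⧸ U) =
      (MulAction.stabilizer G (g : G ⧸ U)).subgroupOf U := rfl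
  intro hfin
  have := MulAction.index_stabilizer U (g : G ⧸ U)
  rw [hstab, hconj, ← Subgroup.relIndex, hg] at this
  exact (Set.ncard_pos hfin).mpr (MulAction.nonempty_orbit _) |>.ne this

section CosetModule

variable {K G : Type} [Field K] [Group G] (U : Subgroup G) (act : G →* (K ≃+* K))

lemma cosetAct_single (σ : G) (q : G ⧸ U) (c : K) :
    cosetAct U act σ (Finsupp.single q c) = Finsupp.single (σ • q) (act σ c) := by
  simp [cosetAct, Finsupp.mapRange_single, Finsupp.mapDomain_single]

lemma cosetAct_map_add (σ : G) (x y : (G ⧸ U) →₀ K) :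
    cosetAct U act σ (x + y) = cosetAct U act σ x + cosetAct U act σ y := by
  simp only [cosetAct, Finsupp.mapRange_add (map_add _), Finsupp.mapDomain_add]

lemma cosetAct_apply_smul (σ : G) (x : (G ⧸ U) →₀ K) (q : G ⧸ U) :
    cosetAct U act σ x (σ • q) = act σ (x q) := by
  rw [cosetAct, Finsupp.mapDomain_apply (MulAction.injective σ), Finsupp.mapRange_apply]

lemma cosetAct_single_one {u : G} (hu : u ∈ U) (c : K) :
    cosetAct U act u (Finsupp.single ((1 : G) : G ⧸ U) c) =
      Finsupp.single ((1 : G) : G ⧸ U) (act u c) := by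
  have hu' : u ∈ MulAction.stabilizer G ((1 : G) : G ⧸ U) := by rwa [MulAction.stabilizer_quotient]
  rw [cosetAct_single, MulAction.mem_stabilizer_iff.mp hu']

lemma diagMul_single (f : K) (q : G ⧸ U) (c : K) :
    diagMul U act f (Finsupp.single q c) = Finsupp.single q (c * act q.out f) := by
  simp [diagMul, Finsupp.sum_single_index]

lemma diagMul_map_add (f : K) (x y : (G ⧸ U) →₀ K) :
    diagMul U act f (x + y) = diagMul U act f x + diagMul U act f y := by
  unfold diagMul
  rw [Finsupp.sum_add_index'] <;> intros <;> simp [add_mul, Finsupp.single_add]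

lemma diagMul_map_smul (f c : K) (x : (G ⧸ U) →₀ K) :
    diagMul U act f (c • x) = c • diagMul U act f x := by
  unfold diagMul
  rw [Finsupp.sum_smul_index (by simp), Finsupp.smul_sum]
  exact Finsupp.sum_congr fun q _ => by rw [Finsupp.smul_single', mul_assoc]

lemma diagMul_zero : diagMul U act (0 : K) = 0 := by
  funext x
  simp [diagMul]

lemma diagMul_one : diagMul U act (1 : K) = id := by
  funext x
  simp [diagMul, Finsupp.sum_single]

lemma diagMul_add (f f' : K) :
    diagMul U act (f + f') = fun x => diagMul U act f x + diagMul U act f' x := by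
  funext x
  rw [diagMul, diagMul, diagMul, ← Finsupp.sum_add]
  exact Finsupp.sum_congr fun q _ => by rw [map_add, mul_add, Finsupp.single_add]

lemma diagMul_mul (f f' : K) :
    diagMul U act (f * f') = diagMul U act f ∘ diagMul U act f' := by
  refine Finsupp.funext_of_map_add (diagMul_map_add U act _)
    (fun x y => by simp only [Function.comp_apply, diagMul_map_add]) fun q c => ?_
  simp only [Function.comp_apply, diagMul_single, map_mul]
  congr 1
  ring

section FixedElement

variable {U act} {f : K} (hf : ∀ u ∈ U, act u f = f)
include hf

lemma act_apply_eq_of_mk_eq {g h : G} (hgh : (g : G ⧸ U) = h) : act g f = act h f := by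
  rw [← mul_inv_cancel_left g h, map_mul, RingAut.mul_apply, hf _ (QuotientGroup.eq.mp hgh)]

lemma act_out_smul_apply (σ : G) (q : G ⧸ U) : act (σ • q).out f = act σ (act q.out f) := by
  rw [← RingAut.mul_apply, ← map_mul]
  refine act_apply_eq_of_mk_eq hf ?_
  rw [QuotientGroup.out_eq', ← smul_eq_mul, ← MulAction.Quotient.smul_mk, QuotientGroup.out_eq']

lemma diagMul_single_one (c : K) :
    diagMul U act f (Finsupp.single ((1 : G) : G ⧸ U) c) =
      Finsupp.single ((1 : G) : G ⧸ U) (c * f) := by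
  rw [diagMul_single, act_apply_eq_of_mk_eq hf (QuotientGroup.out_eq' _), map_one,
    RingAut.one_apply]

lemma isEquivEnd_diagMul : IsEquivEnd U act (diagMul U act f) := by
  refine ⟨diagMul_map_add U act f, diagMul_map_smul U act f, fun σ => congrFun ?_⟩
  refine Finsupp.funext_of_map_add
    (fun x y => by rw [cosetAct_map_add, diagMul_map_add])
    (fun x y => by rw [diagMul_map_add, cosetAct_map_add]) fun q c => ?_
  rw [cosetAct_single, diagMul_single, diagMul_single, cosetAct_single, map_mul,
    act_out_smul_apply hf]

end FixedElement

lemma diagMul_injOn : Set.InjOn (diagMul U act) {f : K | ∀ u ∈ U, act u f = f} := by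
  intro f hf f' hf' h
  have h1 := congrFun h (Finsupp.single ((1 : G) : G ⧸ U) 1)
  rw [diagMul_single_one hf, diagMul_single_one hf', one_mul, one_mul] at h1
  exact Finsupp.single_injective _ h1

variable {U act}

lemma eq_single_one_of_forall_cosetAct_eq
    (hb : ∀ g : G, g ∉ U → (U.map (MulAut.conj g).toMonoidHom).relIndex U = 0)
    {y : (G ⧸ U) →₀ K} (hy : ∀ u ∈ U, cosetAct U act u y = y) :
    y = Finsupp.single ((1 : G) : G ⧸ U) (y ((1 : G) : G ⧸ U)) := by
  refine Finsupp.support_subset_singleton.mp fun q hq => ?_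
  induction q using QuotientGroup.induction_on with | H g => ?_
  by_contra hg1
  have hg : g ∉ U := fun hg => hg1 (by simpa [QuotientGroup.eq] using hg)
  have horbit : MulAction.orbit U (g : G ⧸ U) ⊆ y.support := by
    rintro _ ⟨u, rfl⟩
    change (u : G) • (g : G ⧸ U) ∈ y.support
    rw [Finsupp.mem_support_iff, ← hy u u.2, cosetAct_apply_smul]
    exact (map_ne_zero _).mpr (Finsupp.mem_support_iff.mp hq)
  exact MulAction.orbit_mk_infinite_of_relIndex_eq_zero (hb g hg)
    (y.support.finite_toSet.subset horbit)

lemma IsEquivEnd.eq_diagMul {ψ : ((G ⧸ U) →₀ K) → ((G ⧸ U) →₀ K)} (hψ : IsEquivEnd U act ψ)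
    {f : K}
    (hf : ψ (Finsupp.single ((1 : G) : G ⧸ U) 1) = Finsupp.single ((1 : G) : G ⧸ U) f) :
    ψ = diagMul U act f := by
  obtain ⟨hadd, hsmul, hequiv⟩ := hψ
  refine Finsupp.funext_of_map_add hadd (diagMul_map_add U act f) fun q c => ?_
  have hq : q.out • ((1 : G) : G ⧸ U) = q := by
    rw [MulAction.Quotient.smul_mk, smul_eq_mul, mul_one, QuotientGroup.out_eq']
  set d := (act q.out).symm c
  have hsingle : Finsupp.single q c =
      cosetAct U act q.out (d • Finsupp.single ((1 : G) : G ⧸ U) 1) := by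
    rw [Finsupp.smul_single_one, cosetAct_single, hq, RingEquiv.apply_symm_apply]
  calc ψ (Finsupp.single q c)
      = cosetAct U act q.out (d • ψ (Finsupp.single ((1 : G) : G ⧸ U) 1)) := by
        rw [hsingle, hequiv, hsmul]
    _ = diagMul U act f (Finsupp.single q c) := by
        rw [hf, Finsupp.smul_single', cosetAct_single, hq, diagMul_single, map_mul,
          RingEquiv.apply_symm_apply]

lemma IsEquivEnd.exists_eq_diagMul
    (hb : ∀ g : G, g ∉ U → (U.map (MulAut.conj g).toMonoidHom).relIndex U = 0)
    {ψ : ((G ⧸ U) →₀ K) → ((G ⧸ U) →₀ K)} (hψ : IsEquivEnd U act ψ) :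
    ∃ f : K, (∀ u ∈ U, act u f = f) ∧ ψ = diagMul U act f := by
  set y := ψ (Finsupp.single ((1 : G) : G ⧸ U) 1)
  have hy : ∀ u ∈ U, cosetAct U act u y = y := fun u hu => by
    rw [← hψ.2.2, cosetAct_single_one U act hu, map_one]
  have hy1 := eq_single_one_of_forall_cosetAct_eq hb hy
  refine ⟨y ((1 : G) : G ⧸ U), fun u hu => ?_, hψ.eq_diagMul hy1⟩
  have := hy u hu
  rw [hy1, cosetAct_single_one U act hu] at this
  exact Finsupp.single_injective _ this

lemma IsEquivEnd.eq_zero_or_eq_id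
    (hb : ∀ g : G, g ∉ U → (U.map (MulAut.conj g).toMonoidHom).relIndex U = 0)
    {ψ : ((G ⧸ U) →₀ K) → ((G ⧸ U) →₀ K)} (hψ : IsEquivEnd U act ψ)
    (hidem : ∀ x, ψ (ψ x) = ψ x) :
    ψ = 0 ∨ ψ = id := by
  obtain ⟨f, hf, rfl⟩ := hψ.exists_eq_diagMul hb
  have hff : f * f = f :=
    diagMul_injOn U act (fun u hu => by rw [map_mul, hf u hu]) hf
      (by rw [diagMul_mul]; exact funext hidem)
  rcases IsIdempotentElem.iff_eq_zero_or_one.mp hff with rfl | rfl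
  exacts [Or.inl (diagMul_zero U act), Or.inr (diagMul_one U act)]

lemma isEquivEnd_projection {P Q : Submodule K ((G ⧸ U) →₀ K)} (h : IsCompl P Q)
    (hP : ∀ σ : G, ∀ x ∈ P, cosetAct U act σ x ∈ P)
    (hQ : ∀ σ : G, ∀ x ∈ Q, cosetAct U act σ x ∈ Q) :
    IsEquivEnd U act (P.projection Q h) :=
  ⟨map_add _, map_smul _, fun σ =>
    Submodule.projection_map_comm h (cosetAct_map_add U act σ) (hP σ) (hQ σ)⟩

lemma eq_bot_or_eq_bot_of_isCompl
    (hb : ∀ g : G, g ∉ U → (U.map (MulAut.conj g).toMonoidHom).relIndex U = 0)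
    {P Q : Submodule K ((G ⧸ U) →₀ K)} (h : IsCompl P Q)
    (hP : ∀ σ : G, ∀ x ∈ P, cosetAct U act σ x ∈ P)
    (hQ : ∀ σ : G, ∀ x ∈ Q, cosetAct U act σ x ∈ Q) :
    P = ⊥ ∨ Q = ⊥ := by
  have hidem : ∀ x, P.projection Q h (P.projection Q h x) = P.projection Q h x := fun x =>
    Submodule.projection_apply_of_mem_left h (Submodule.projection_apply_mem h x)
  rcases (isEquivEnd_projection h hP hQ).eq_zero_or_eq_id hb hidem with h0 | hid
  · left
    rw [← Submodule.range_projection h,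
      show P.projection Q h = 0 from LinearMap.coe_injective h0, LinearMap.range_zero]
  · right
    rw [← Submodule.ker_projection h,
      show P.projection Q h = LinearMap.id from LinearMap.coe_injective hid, LinearMap.ker_id]

end CosetModule

theorem endomorphisms_of_coset_module_eq_fixed_field_general
    (K G : Type) [Field K] [Group G]
    (act : G →* (K ≃+* K)) (U : Subgroup G)
    (hb : ∀ g : G, g ∉ U →
      (Subgroup.map (MulAut.conj g).toMonoidHom U).relIndex U = 0) :
    -- `φ_f` is a `K`-linear `G`-equivariant endomorphism for every `f ∈ K^U`
    (∀ f : K, (∀ u ∈ U, act u f = f) → IsEquivEnd U act (diagMul U act f)) ∧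
    -- `f ↦ φ_f` is injective on `K^U`
    Set.InjOn (diagMul U act) {f : K | ∀ u ∈ U, act u f = f} ∧
    -- `f ↦ φ_f` is surjective onto the equivariant endomorphisms
    (∀ ψ : ((G ⧸ U) →₀ K) → ((G ⧸ U) →₀ K), IsEquivEnd U act ψ →
      ∃ f : K, (∀ u ∈ U, act u f = f) ∧ ψ = diagMul U act f) ∧
    -- `f ↦ φ_f` is a ring homomorphism (addition, multiplication, unit)
    (∀ f f' : K, (∀ u ∈ U, act u f = f) → (∀ u ∈ U, act u f' = f') →
      diagMul U act (f + f') = (fun x => diagMul U act f x + diagMul U act f' x) ∧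
      diagMul U act (f * f') = diagMul U act f ∘ diagMul U act f') ∧
    diagMul U act (1 : K) = id ∧
    -- in particular, `K⟨G/U⟩` is indecomposable
    ¬ ∃ P Q : Submodule K ((G ⧸ U) →₀ K),
        (∀ σ : G, ∀ x ∈ P, cosetAct U act σ x ∈ P) ∧
        (∀ σ : G, ∀ x ∈ Q, cosetAct U act σ x ∈ Q) ∧
        P ≠ ⊥ ∧ Q ≠ ⊥ ∧ P ⊓ Q = ⊥ ∧ P ⊔ Q = ⊤ := by
  refine ⟨fun f hf => isEquivEnd_diagMul hf, diagMul_injOn U act,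
    fun ψ hψ => hψ.exists_eq_diagMul hb,
    fun f f' _ _ => ⟨diagMul_add U act f f', diagMul_mul U act f f'⟩, diagMul_one U act, ?_⟩
  rintro ⟨P, Q, hP, hQ, hP0, hQ0, hinf, hsup⟩
  have hPQ : IsCompl P Q := ⟨disjoint_iff.mpr hinf, codisjoint_iff.mpr hsup⟩
  exact (eq_bot_or_eq_bot_of_isCompl hb hPQ hP hQ).elim hP0 hQ0

/-- **`End_{K⟨G⟩}(K⟨G/U⟩) = K^U`; in particular `K⟨G/U⟩` is indecomposable.**
`G` acts on the field `K` via `act`; `U ≤ G` is self-normalizing in the strong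
sense (a): `{g | gUg⁻¹ ⊆ U} = U`, and (b): for `g ∉ U` the index
`[U : U ∩ gUg⁻¹]` is infinite.  Then `f ↦ φ_f` is a ring isomorphism from the
fixed field `K^U` onto the ring of `K`-linear `G`-equivariant endomorphisms of
`K⟨G/U⟩`, and `K⟨G/U⟩` is not a direct sum of two nonzero `G`-stable
`K`-subspaces. -/
theorem endomorphisms_of_coset_module_eq_fixed_field
    (K G : Type) [Field K] [Group G]
    (act : G →* (K ≃+* K)) (U : Subgroup G)
    (ha : {g : G | ∀ u ∈ U, g * u * g⁻¹ ∈ U} = (U : Set G))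
    (hb : ∀ g : G, g ∉ U →
      (Subgroup.map (MulAut.conj g).toMonoidHom U).relIndex U = 0) :
    -- `φ_f` is a `K`-linear `G`-equivariant endomorphism for every `f ∈ K^U`
    (∀ f : K, (∀ u ∈ U, act u f = f) → IsEquivEnd U act (diagMul U act f)) ∧
    -- `f ↦ φ_f` is injective on `K^U`
    Set.InjOn (diagMul U act) {f : K | ∀ u ∈ U, act u f = f} ∧
    -- `f ↦ φ_f` is surjective onto the equivariant endomorphisms
    (∀ ψ : ((G ⧸ U) →₀ K) → ((G ⧸ U) →₀ K), IsEquivEnd U act ψ →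
      ∃ f : K, (∀ u ∈ U, act u f = f) ∧ ψ = diagMul U act f) ∧
    -- `f ↦ φ_f` is a ring homomorphism (addition, multiplication, unit)
    (∀ f f' : K, (∀ u ∈ U, act u f = f) → (∀ u ∈ U, act u f' = f') →
      diagMul U act (f + f') = (fun x => diagMul U act f x + diagMul U act f' x) ∧
      diagMul U act (f * f') = diagMul U act f ∘ diagMul U act f') ∧
    diagMul U act (1 : K) = id ∧
    -- in particular, `K⟨G/U⟩` is indecomposable
    ¬ ∃ P Q : Submodule K ((G ⧸ U) →₀ K),
        (∀ σ : G, ∀ x ∈ P, cosetAct U act σ x ∈ P) ∧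
        (∀ σ : G, ∀ x ∈ Q, cosetAct U act σ x ∈ Q) ∧
        P ≠ ⊥ ∧ Q ≠ ⊥ ∧ P ⊓ Q = ⊥ ∧ P ⊔ Q = ⊤ :=
  endomorphisms_of_coset_module_eq_fixed_field_general K G act U hb
end

section
/- Let Ψ be an infinite set, A a division ring equipped with an action of S_Ψ by ring automorphisms, and m ∈ ℕ. Let A⟨binom(Ψ,m)⟩ be the free left A-module on the set of m-element subsets of Ψ, with S_Ψ acting by g•(a·[S]) = (g•a)·[g(S)]. Then any two nonzero S_Ψ-stable A-submodules of A⟨binom(Ψ,m)⟩ have nonzero intersection; equivalently, every nonzero S_Ψ-stable A-submodule of A⟨binom(Ψ,m)⟩ is essential. -/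
set_option maxHeartbeats 1000000
set_option synthInstance.maxHeartbeats 400000


/-- The twisted action of a permutation `g` of `Ψ` on the free left `A`-module
`A⟨binom(Ψ,m)⟩` on the set of `m`-element subsets of `Ψ`:
`g • (a·[S]) = (φ g a)·[g(S)]`. -/
noncomputable def binomAct {Ψ A : Type} [DecidableEq Ψ] [DivisionRing A] {m : ℕ}
    (φ : Equiv.Perm Ψ →* (A ≃+* A)) (g : Equiv.Perm Ψ)
    (x : {S : Finset Ψ // S.card = m} →₀ A) : {S : Finset Ψ // S.card = m} →₀ A :=
  Finsupp.mapDomain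
    (fun S : {S : Finset Ψ // S.card = m} =>
      (⟨S.1.image g, by rw [Finset.card_image_of_injective _ g.injective]; exact S.2⟩ :
        {S : Finset Ψ // S.card = m}))
    (x.mapRange (φ g) (map_zero _))

section Auxiliary

variable {Ψ : Type} [DecidableEq Ψ]

/-- The underlying function of the permutation exchanging two disjoint finsets
along a given bijection. -/
noncomputable def pswapFun (s t : Finset Ψ) (e : {a // a ∈ s} ≃ {a // a ∈ t}) : Ψ → Ψ :=
  fun ψ => if h : ψ ∈ s then (e ⟨ψ, h⟩ : Ψ) else if h' : ψ ∈ t then (e.symm ⟨ψ, h'⟩ : Ψ) else ψ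

lemma pswapFun_involutive (s t : Finset Ψ) (hd : Disjoint s t)
    (e : {a // a ∈ s} ≃ {a // a ∈ t}) : Function.Involutive (pswapFun s t e) := by
  intro ψ
  unfold pswapFun
  by_cases h : ψ ∈ s
  · rw [dif_pos h]
    have ht : ((e ⟨ψ, h⟩ : {a // a ∈ t}) : Ψ) ∈ t := (e ⟨ψ, h⟩).2
    have hs : ((e ⟨ψ, h⟩ : {a // a ∈ t}) : Ψ) ∉ s := fun hh => Finset.disjoint_left.mp hd hh ht
    rw [dif_neg hs, dif_pos ht]
    simp
  · by_cases h' : ψ ∈ t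
    · rw [dif_neg h, dif_pos h']
      have hs : ((e.symm ⟨ψ, h'⟩ : {a // a ∈ s}) : Ψ) ∈ s := (e.symm ⟨ψ, h'⟩).2
      rw [dif_pos hs]
      simp
    · rw [dif_neg h, dif_neg h', dif_neg h, dif_neg h']

/-- The permutation exchanging two disjoint finsets along a given bijection. -/
noncomputable def pswap (s t : Finset Ψ) (hd : Disjoint s t)
    (e : {a // a ∈ s} ≃ {a // a ∈ t}) : Equiv.Perm Ψ :=
  Function.Involutive.toPerm _ (pswapFun_involutive s t hd e)

lemma pswap_apply_mem (s t : Finset Ψ) (hd : Disjoint s t) (e : {a // a ∈ s} ≃ {a // a ∈ t})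
    {ψ : Ψ} (h : ψ ∈ s) : pswap s t hd e ψ = (e ⟨ψ, h⟩ : Ψ) := by
  show pswapFun s t e ψ = _
  unfold pswapFun
  rw [dif_pos h]

lemma pswap_apply_not_mem (s t : Finset Ψ) (hd : Disjoint s t) (e : {a // a ∈ s} ≃ {a // a ∈ t})
    {ψ : Ψ} (h : ψ ∉ s) (h' : ψ ∉ t) : pswap s t hd e ψ = ψ := by
  show pswapFun s t e ψ = _
  unfold pswapFun
  rw [dif_neg h, dif_neg h']

lemma exists_fresh_finset [Infinite Ψ] (B : Finset Ψ) (n : ℕ) :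
    ∃ Z : Finset Ψ, Disjoint Z B ∧ Z.card = n := by
  obtain ⟨t, hsub, hcard⟩ :=
    (Set.Finite.infinite_compl B.finite_toSet).exists_subset_card_eq n
  refine ⟨t, ?_, hcard⟩
  rw [Finset.disjoint_left]
  intro a ha haB
  exact hsub ha (Finset.mem_coe.mpr haB)

lemma choose_add_le (v k : ℕ) :
    ∀ c : ℕ, Nat.choose (v + c) (k + 1) ≤ Nat.choose v (k + 1) + c * Nat.choose (v + c) k := by
  intro c
  induction c with
  | zero => simp
  | succ c ih =>
      have h1 : v + (c + 1) = (v + c) + 1 := by omega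
      rw [h1]
      calc Nat.choose ((v + c) + 1) (k + 1)
          = Nat.choose (v + c) k + Nat.choose (v + c) (k + 1) := Nat.choose_succ_succ' _ _
        _ ≤ Nat.choose (v + c) k + (Nat.choose v (k + 1) + c * Nat.choose (v + c) k) :=
            Nat.add_le_add_left ih _
        _ = Nat.choose v (k + 1) + (c + 1) * Nat.choose (v + c) k := by ring
        _ ≤ Nat.choose v (k + 1) + (c + 1) * Nat.choose ((v + c) + 1) k := by
            have h2 : Nat.choose (v + c) k ≤ Nat.choose (v + c + 1) k :=
              Nat.choose_le_choose k (by omega)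
            exact Nat.add_le_add_left (Nat.mul_le_mul_left _ h2) _

lemma exists_choose_lt (c m : ℕ) :
    ∃ v : ℕ, Nat.choose (v + c) m < 2 * Nat.choose v m := by
  cases m with
  | zero => exact ⟨0, by simp⟩
  | succ k =>
      refine ⟨2 * c * (k + 1) + (k + 1), ?_⟩
      set v := 2 * c * (k + 1) + (k + 1) with hv
      by_contra hcon
      push_neg at hcon
      -- hcon : 2 * Nat.choose v (k+1) ≤ Nat.choose (v+c) (k+1)
      have hA := choose_add_le v k c
      have hD : 0 < Nat.choose (v + c) k := Nat.choose_pos (by omega)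
      have hid := Nat.choose_succ_right_eq (v + c) k
      set B := Nat.choose (v + c) (k + 1) with hB
      set Cv := Nat.choose v (k + 1) with hCv
      set D := Nat.choose (v + c) k with hDdef
      have h1 : 2 * B ≤ 2 * Cv + 2 * (c * D) := by
        calc 2 * B ≤ 2 * (Cv + c * D) := Nat.mul_le_mul_left 2 hA
          _ = 2 * Cv + 2 * (c * D) := by ring
      have hB2 : B ≤ 2 * (c * D) := by
        set E := c * D
        omega
      have h3 : B * (k + 1) ≤ 2 * (c * D) * (k + 1) := Nat.mul_le_mul_right _ hB2
      rw [hid] at h3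
      have hvk : v + c - k = 2 * c * (k + 1) + c + 1 := by omega
      rw [hvk] at h3
      have hexp : D * (2 * c * (k + 1) + c + 1) = 2 * (c * D) * (k + 1) + D * (c + 1) := by ring
      rw [hexp] at h3
      have hpos : 0 < D * (c + 1) := Nat.mul_pos hD (by omega)
      set X := 2 * (c * D) * (k + 1)
      set Y := D * (c + 1)
      omega

end Auxiliary

section Key

variable {Ψ A : Type} [DecidableEq Ψ] [DivisionRing A] {m : ℕ}

/-- The map induced on `m`-subsets by a permutation. -/
noncomputable def sigmaMap (g : Equiv.Perm Ψ) :
    {S : Finset Ψ // S.card = m} → {S : Finset Ψ // S.card = m} :=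
  fun S => ⟨S.1.image g, by rw [Finset.card_image_of_injective _ g.injective]; exact S.2⟩

lemma binomAct_eq (φ : Equiv.Perm Ψ →* (A ≃+* A)) (g : Equiv.Perm Ψ)
    (x : {S : Finset Ψ // S.card = m} →₀ A) :
    binomAct φ g x = Finsupp.mapDomain (sigmaMap g) (x.mapRange (φ g) (map_zero _)) := rfl

lemma sigmaMap_injective (g : Equiv.Perm Ψ) :
    Function.Injective (sigmaMap (m := m) g) := by
  intro S S' h
  have : S.1.image g = S'.1.image g := congrArg Subtype.val h
  exact Subtype.ext (Finset.image_injective g.injective this)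

/-- The key construction: given a nonzero `x` and disjoint fresh finsets `V`, `Z`,
produce a linearly independent family of translates of `x`, one for each `m`-subset
of `V`, all supported inside `V ∪ Z`. -/
lemma key_family (φ : Equiv.Perm Ψ →* (A ≃+* A))
    (x : {S : Finset Ψ // S.card = m} →₀ A)
    (S₀ : {S : Finset Ψ // S.card = m}) (hS₀ : S₀ ∈ x.support)
    (V Z : Finset Ψ)
    (hUV : Disjoint (x.support.biUnion fun S => S.1) V)
    (hUZ : Disjoint (x.support.biUnion fun S => S.1) Z)
    (hVZ : Disjoint V Z)
    (hZ : Z.card = ((x.support.biUnion fun S => S.1) \ S₀.1).card) :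
    ∃ Y : {T : Finset Ψ // T ∈ V.powersetCard m} → ({S : Finset Ψ // S.card = m} →₀ A),
      LinearIndependent A Y ∧
      (∀ i, ∃ g : Equiv.Perm Ψ, Y i = binomAct φ g x) ∧
      (∀ i S, S ∈ (Y i).support → S.1 ⊆ V ∪ Z) := by
  classical
  set U : Finset Ψ := x.support.biUnion fun S => S.1 with hU
  have hsubU : ∀ S ∈ x.support, S.1 ⊆ U := by
    intro S hS p hp
    exact Finset.mem_biUnion.mpr ⟨S, hS, hp⟩
  have hS₀U : S₀.1 ⊆ U := hsubU S₀ hS₀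
  -- construct the permutations
  have hgex : ∀ i : {T : Finset Ψ // T ∈ V.powersetCard m},
      ∃ g : Equiv.Perm Ψ, (∀ p ∈ S₀.1, g p ∈ i.1) ∧ (∀ p ∈ U, p ∉ S₀.1 → g p ∈ Z) := by
    intro i
    obtain ⟨hTV, hTm⟩ := Finset.mem_powersetCard.mp i.2
    have hd₁ : Disjoint S₀.1 i.1 := Finset.disjoint_of_subset_left hS₀U
      (Finset.disjoint_of_subset_right hTV hUV)
    have hd₂ : Disjoint (U \ S₀.1) Z :=
      Finset.disjoint_of_subset_left (Finset.sdiff_subset) hUZ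
    have hc₁ : Fintype.card {a // a ∈ S₀.1} = Fintype.card {a // a ∈ i.1} := by
      rw [Fintype.card_coe, Fintype.card_coe, S₀.2, hTm]
    have hc₂ : Fintype.card {a // a ∈ U \ S₀.1} = Fintype.card {a // a ∈ Z} := by
      rw [Fintype.card_coe, Fintype.card_coe, hZ]
    set e₁ := Fintype.equivOfCardEq hc₁
    set e₂ := Fintype.equivOfCardEq hc₂
    set sw₁ := pswap S₀.1 i.1 hd₁ e₁
    set sw₂ := pswap (U \ S₀.1) Z hd₂ e₂
    refine ⟨sw₂ * sw₁, ?_, ?_⟩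
    · intro p hp
      have h1 : sw₁ p = (e₁ ⟨p, hp⟩ : Ψ) := pswap_apply_mem _ _ _ _ hp
      have hq : (e₁ ⟨p, hp⟩ : Ψ) ∈ i.1 := (e₁ ⟨p, hp⟩).2
      have hqV : (e₁ ⟨p, hp⟩ : Ψ) ∈ V := hTV hq
      have hqnU : (e₁ ⟨p, hp⟩ : Ψ) ∉ U \ S₀.1 := by
        intro hh
        exact Finset.disjoint_left.mp hUV (Finset.mem_sdiff.mp hh).1 hqV
      have hqnZ : (e₁ ⟨p, hp⟩ : Ψ) ∉ Z := fun hh => Finset.disjoint_left.mp hVZ hqV hh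
      have h2 : sw₂ (e₁ ⟨p, hp⟩ : Ψ) = (e₁ ⟨p, hp⟩ : Ψ) := pswap_apply_not_mem _ _ _ _ hqnU hqnZ
      show sw₂ (sw₁ p) ∈ i.1
      rw [h1, h2]
      exact hq
    · intro p hpU hpS₀
      have hpnT : p ∉ i.1 := fun hh => Finset.disjoint_left.mp hUV hpU (hTV hh)
      have h1 : sw₁ p = p := pswap_apply_not_mem _ _ _ _ hpS₀ hpnT
      have hpUS : p ∈ U \ S₀.1 := Finset.mem_sdiff.mpr ⟨hpU, hpS₀⟩
      have h2 : sw₂ p = (e₂ ⟨p, hpUS⟩ : Ψ) := pswap_apply_mem _ _ _ _ hpUS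
      show sw₂ (sw₁ p) ∈ Z
      rw [h1, h2]
      exact (e₂ ⟨p, hpUS⟩).2
  choose g hg1 hg2 using hgex
  -- the family
  set Y : {T : Finset Ψ // T ∈ V.powersetCard m} → ({S : Finset Ψ // S.card = m} →₀ A) :=
    fun i => binomAct φ (g i) x with hY
  -- image of S₀ is exactly the target set
  have himg : ∀ i, S₀.1.image (g i) = i.1 := by
    intro i
    obtain ⟨hTV, hTm⟩ := Finset.mem_powersetCard.mp i.2
    apply Finset.eq_of_subset_of_card_le
    · intro q hq
      obtain ⟨p, hp, rfl⟩ := Finset.mem_image.mp hq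
      exact hg1 i p hp
    · rw [Finset.card_image_of_injective _ (g i).injective, S₀.2, hTm]
  have hTicard : ∀ i : {T : Finset Ψ // T ∈ V.powersetCard m}, i.1.card = m :=
    fun i => (Finset.mem_powersetCard.mp i.2).2
  set Ti : {T : Finset Ψ // T ∈ V.powersetCard m} → {S : Finset Ψ // S.card = m} :=
    fun i => ⟨i.1, hTicard i⟩ with hTidef
  have hσS₀ : ∀ i, sigmaMap (g i) S₀ = Ti i := fun i => Subtype.ext (himg i)
  -- support of each Y i
  have hsupp : ∀ i, (Y i).support ⊆ x.support.image (sigmaMap (g i)) := by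
    intro i
    show (Finsupp.mapDomain (sigmaMap (g i)) (x.mapRange (φ (g i)) (map_zero _))).support ⊆
      x.support.image (sigmaMap (g i))
    refine subset_trans Finsupp.mapDomain_support ?_
    exact Finset.image_subset_image Finsupp.support_mapRange
  -- the diagonal coefficients are nonzero
  have hcoeff : ∀ i, (Y i) (Ti i) = (φ (g i)) (x S₀) := by
    intro i
    show (Finsupp.mapDomain (sigmaMap (g i)) (x.mapRange (φ (g i)) (map_zero _))) (Ti i) =
      (φ (g i)) (x S₀)
    rw [← hσS₀ i, Finsupp.mapDomain_apply (sigmaMap_injective (g i)),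
      Finsupp.mapRange_apply]
  have hne : ∀ i, (Y i) (Ti i) ≠ 0 := by
    intro i h
    rw [hcoeff i] at h
    have : x S₀ = 0 := (φ (g i)).injective (by rw [h, map_zero])
    exact Finsupp.mem_support_iff.mp hS₀ this
  -- off-diagonal coefficients vanish
  have hvanish : ∀ i j, j ≠ i → (Y j) (Ti i) = 0 := by
    intro i j hji
    by_contra h
    have hmem : Ti i ∈ (Y j).support := Finsupp.mem_support_iff.mpr h
    obtain ⟨S, hSx, hSeq⟩ := Finset.mem_image.mp (hsupp j hmem)
    by_cases hSS₀ : S = S₀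
    · subst hSS₀
      rw [hσS₀ j] at hSeq
      apply hji
      apply Subtype.ext
      have := congrArg Subtype.val hSeq
      simpa [hTidef] using this
    · have hnsub : ¬ S.1 ⊆ S₀.1 := by
        intro hsub
        have : S.1 = S₀.1 := Finset.eq_of_subset_of_card_le hsub (by rw [S.2, S₀.2])
        exact hSS₀ (Subtype.ext this)
      obtain ⟨p, hpS, hpnS₀⟩ := Finset.not_subset.mp hnsub
      have hpU : p ∈ U := hsubU S hSx hpS
      have hgZ : (g j) p ∈ Z := hg2 j p hpU hpnS₀
      have hgT : (g j) p ∈ i.1 := by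
        have : (g j) p ∈ S.1.image (g j) := Finset.mem_image_of_mem _ hpS
        have heq : S.1.image (g j) = i.1 := congrArg Subtype.val hSeq
        rwa [heq] at this
      have hTV : i.1 ⊆ V := (Finset.mem_powersetCard.mp i.2).1
      exact Finset.disjoint_left.mp hVZ (hTV hgT) hgZ
  refine ⟨Y, ?_, fun i => ⟨g i, rfl⟩, ?_⟩
  · rw [Fintype.linearIndependent_iff]
    intro cfn hsum i
    have h0 : (∑ j, cfn j • Y j) (Ti i) = 0 := by rw [hsum]; rfl
    rw [Finset.sum_apply'] at h0
    have hsingle : ∀ j ∈ Finset.univ, j ≠ i → (cfn j • Y j) (Ti i) = 0 := by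
      intro j _ hji
      rw [Finsupp.smul_apply, hvanish i j hji, smul_zero]
    rw [Finset.sum_eq_single_of_mem i (Finset.mem_univ i) hsingle] at h0
    rw [Finsupp.smul_apply, smul_eq_mul] at h0
    exact (mul_eq_zero.mp h0).resolve_right (hne i)
  · intro i S hS
    obtain ⟨S', hS'x, hS'eq⟩ := Finset.mem_image.mp (hsupp i hS)
    have : S.1 = S'.1.image (g i) := (congrArg Subtype.val hS'eq).symm
    rw [this]
    intro q hq
    obtain ⟨p, hp, rfl⟩ := Finset.mem_image.mp hq
    by_cases hpS₀ : p ∈ S₀.1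
    · have : (g i) p ∈ i.1 := hg1 i p hpS₀
      exact Finset.mem_union_left _ ((Finset.mem_powersetCard.mp i.2).1 this)
    · have : (g i) p ∈ Z := hg2 i p (hsubU S' hS'x hp) hpS₀
      exact Finset.mem_union_right _ this

end Key

/-- **Every nonzero `S_Ψ`-stable `A`-submodule of `A⟨binom(Ψ,m)⟩` is
essential.**  `A` is a division ring with an action `φ` of `S_Ψ` by ring
automorphisms, and `A⟨binom(Ψ,m)⟩` is the free left `A`-module on the
`m`-element subsets of `Ψ`, with the twisted `S_Ψ`-action.  Then any two
nonzero `S_Ψ`-stable `A`-submodules have nonzero intersection. -/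
theorem nonzero_stable_submodules_of_binom_module_intersect
    (Ψ : Type) [Infinite Ψ] [DecidableEq Ψ]
    (A : Type) [DivisionRing A]
    (φ : Equiv.Perm Ψ →* (A ≃+* A)) (m : ℕ)
    (P Q : Submodule A ({S : Finset Ψ // S.card = m} →₀ A))
    (hP : ∀ g : Equiv.Perm Ψ, ∀ x ∈ P, binomAct φ g x ∈ P)
    (hQ : ∀ g : Equiv.Perm Ψ, ∀ x ∈ Q, binomAct φ g x ∈ Q)
    (hPne : P ≠ ⊥) (hQne : Q ≠ ⊥) :
    P ⊓ Q ≠ ⊥ := by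
  classical
  obtain ⟨x, hxP, hx0⟩ := Submodule.exists_mem_ne_zero_of_ne_bot hPne
  obtain ⟨x', hxQ, hx0'⟩ := Submodule.exists_mem_ne_zero_of_ne_bot hQne
  obtain ⟨S₀, hS₀⟩ := Finsupp.support_nonempty_iff.mpr hx0
  obtain ⟨S₀', hS₀'⟩ := Finsupp.support_nonempty_iff.mpr hx0'
  set U₁ : Finset Ψ := x.support.biUnion fun S => S.1 with hU₁
  set U₂ : Finset Ψ := x'.support.biUnion fun S => S.1 with hU₂
  set c₁ := (U₁ \ S₀.1).card with hc₁
  set c₂ := (U₂ \ S₀'.1).card with hc₂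
  obtain ⟨v, hvlt⟩ := exists_choose_lt (c₁ + c₂) m
  obtain ⟨V, hVd, hVcard⟩ := exists_fresh_finset (U₁ ∪ U₂) v
  obtain ⟨Z₁, hZ₁d, hZ₁card⟩ := exists_fresh_finset (U₁ ∪ U₂ ∪ V) c₁
  obtain ⟨Z₂, hZ₂d, hZ₂card⟩ := exists_fresh_finset (U₁ ∪ U₂ ∪ V ∪ Z₁) c₂
  -- disjointness facts
  have hU₁V : Disjoint U₁ V := (Finset.disjoint_union_left.mp hVd.symm).1
  have hU₂V : Disjoint U₂ V := (Finset.disjoint_union_left.mp hVd.symm).2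
  have hZ₁d' := Finset.disjoint_union_left.mp hZ₁d.symm
  have hU₁Z₁ : Disjoint U₁ Z₁ := (Finset.disjoint_union_left.mp hZ₁d'.1).1
  have hU₂Z₁ : Disjoint U₂ Z₁ := (Finset.disjoint_union_left.mp hZ₁d'.1).2
  have hVZ₁ : Disjoint V Z₁ := hZ₁d'.2
  have hZ₂d' := Finset.disjoint_union_left.mp hZ₂d.symm
  have hZ₂d'' := Finset.disjoint_union_left.mp hZ₂d'.1
  have hU₁Z₂ : Disjoint U₁ Z₂ := (Finset.disjoint_union_left.mp hZ₂d''.1).1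
  have hU₂Z₂ : Disjoint U₂ Z₂ := (Finset.disjoint_union_left.mp hZ₂d''.1).2
  have hVZ₂ : Disjoint V Z₂ := hZ₂d''.2
  have hZ₁Z₂ : Disjoint Z₁ Z₂ := hZ₂d'.2
  -- the two families
  obtain ⟨Y₁, hli₁, hact₁, hsupp₁⟩ :=
    key_family φ x S₀ hS₀ V Z₁ hU₁V hU₁Z₁ hVZ₁ hZ₁card
  obtain ⟨Y₂, hli₂, hact₂, hsupp₂⟩ :=
    key_family φ x' S₀' hS₀' V Z₂ hU₂V hU₂Z₂ hVZ₂ hZ₂card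
  set VP : Submodule A ({S : Finset Ψ // S.card = m} →₀ A) :=
    Submodule.span A (Set.range Y₁) with hVP
  set VQ : Submodule A ({S : Finset Ψ // S.card = m} →₀ A) :=
    Submodule.span A (Set.range Y₂) with hVQ
  have hVPle : VP ≤ P := by
    rw [hVP, Submodule.span_le]
    rintro _ ⟨i, rfl⟩
    obtain ⟨gi, hgi⟩ := hact₁ i
    rw [hgi]
    exact hP gi x hxP
  have hVQle : VQ ≤ Q := by
    rw [hVQ, Submodule.span_le]
    rintro _ ⟨i, rfl⟩
    obtain ⟨gi, hgi⟩ := hact₂ i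
    rw [hgi]
    exact hQ gi x' hxQ
  -- the window
  set W : Finset Ψ := V ∪ Z₁ ∪ Z₂ with hW
  have hWcard : W.card = v + (c₁ + c₂) := by
    rw [hW, Finset.card_union_of_disjoint, Finset.card_union_of_disjoint hVZ₁,
      hVcard, hZ₁card, hZ₂card]
    · ring
    · rw [Finset.disjoint_union_left]
      exact ⟨hVZ₂, hZ₁Z₂⟩
  set D : Finset {S : Finset Ψ // S.card = m} :=
    (W.powersetCard m).subtype (fun T => T.card = m) with hD
  have hDcard : D.card = Nat.choose (v + (c₁ + c₂)) m := by
    rw [hD, Finset.card_subtype,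
      Finset.filter_true_of_mem (fun T hT => (Finset.mem_powersetCard.mp hT).2),
      Finset.card_powersetCard, hWcard]
  set MW : Submodule A ({S : Finset Ψ // S.card = m} →₀ A) :=
    Finsupp.supported A A (↑D : Set {S : Finset Ψ // S.card = m}) with hMW
  have hmemMW : ∀ (y : {S : Finset Ψ // S.card = m} →₀ A), (∀ S ∈ y.support, S.1 ⊆ V ∪ Z₁ ∨ S.1 ⊆ V ∪ Z₂) → y ∈ MW := by
    intro y hy
    rw [hMW, Finsupp.mem_supported]
    intro S hS
    have hS' := hy S (by simpa using hS)
    have hsub : S.1 ⊆ W := by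
      rcases hS' with h | h
      · intro q hq
        rcases Finset.mem_union.mp (h hq) with h' | h'
        · exact Finset.mem_union_left _ (Finset.mem_union_left _ h')
        · exact Finset.mem_union_left _ (Finset.mem_union_right _ h')
      · intro q hq
        rcases Finset.mem_union.mp (h hq) with h' | h'
        · exact Finset.mem_union_left _ (Finset.mem_union_left _ h')
        · exact Finset.mem_union_right _ h'
    have : S ∈ D := by
      rw [hD, Finset.mem_subtype]
      exact Finset.mem_powersetCard.mpr ⟨hsub, S.2⟩
    exact Finset.mem_coe.mpr this
  have hsuple : VP ⊔ VQ ≤ MW := by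
    apply sup_le
    · rw [hVP, Submodule.span_le]
      rintro _ ⟨i, rfl⟩
      exact hmemMW _ (fun S hS => Or.inl (hsupp₁ i S hS))
    · rw [hVQ, Submodule.span_le]
      rintro _ ⟨i, rfl⟩
      exact hmemMW _ (fun S hS => Or.inr (hsupp₂ i S hS))
  -- finite dimensionality of the window
  let eD : MW ≃ₗ[A] ((↑D : Set {S : Finset Ψ // S.card = m}) →₀ A) :=
    Finsupp.supportedEquivFinsupp _
  let eD2 : ((↑D : Set {S : Finset Ψ // S.card = m}) →₀ A) ≃ₗ[A]
      ((↑D : Set {S : Finset Ψ // S.card = m}) → A) :=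
    Finsupp.linearEquivFunOnFinite A A _
  haveI hMWfin : FiniteDimensional A MW :=
    Module.Finite.equiv (eD.trans eD2).symm
  have hMWrank : Module.finrank A MW = Nat.choose (v + (c₁ + c₂)) m := by
    rw [(eD.trans eD2).finrank_eq, Module.finrank_fintype_fun_eq_card]
    rw [← hDcard]
    exact Fintype.card_coe D
  -- dimensions of the spans
  have hcardidx : Fintype.card {T : Finset Ψ // T ∈ V.powersetCard m} = Nat.choose v m := by
    rw [Fintype.card_coe, Finset.card_powersetCard, hVcard]
  haveI hVPfin : FiniteDimensional A VP := FiniteDimensional.span_of_finite A (Set.finite_range Y₁)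
  haveI hVQfin : FiniteDimensional A VQ := FiniteDimensional.span_of_finite A (Set.finite_range Y₂)
  have hVPrank : Module.finrank A VP = Nat.choose v m := by
    rw [hVP, finrank_span_eq_card hli₁, hcardidx]
  have hVQrank : Module.finrank A VQ = Nat.choose v m := by
    rw [hVQ, finrank_span_eq_card hli₂, hcardidx]
  -- the sup has dimension at most that of the window
  have hsuprank : Module.finrank A ↥(VP ⊔ VQ) ≤ Nat.choose (v + (c₁ + c₂)) m := by
    exact le_trans (Submodule.finrank_mono hsuple) (le_of_eq hMWrank)
  have hsum := Submodule.finrank_sup_add_finrank_inf_eq VP VQ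
  have hinfpos : 0 < Module.finrank A ↥(VP ⊓ VQ) := by
    rw [hVPrank, hVQrank] at hsum
    omega
  have hinfne : VP ⊓ VQ ≠ ⊥ := by
    intro h
    rw [h] at hinfpos
    rw [finrank_bot] at hinfpos
    exact Nat.lt_irrefl 0 hinfpos
  intro h
  apply hinfne
  have hle : VP ⊓ VQ ≤ P ⊓ Q := inf_le_inf hVPle hVQle
  rw [h, le_bot_iff] at hle
  exact hle
end

section
/- Let Ψ be an infinite set and T₁, T₂ finite subsets of Ψ. Then the subgroup of S_Ψ generated by the union of the pointwise stabilizers S_{Ψ|T₁} and S_{Ψ|T₂} equals the pointwise stabilizer S_{Ψ|T₁∩T₂}. -/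
/-!
Let `g` fix `T₁ ∩ T₂` pointwise and put `A = T₁ \ T₂`. Since `Ψ \ (T₁ ∪ T₂)` is infinite, some
`a ∈ S_{Ψ|T₁}` pushes the points of `g A` outside `T₁` into it, so that `a g A` misses `T₂`. As
`S_{Ψ|T₂}` acts highly transitively on `Ψ \ T₂`, some `c ∈ S_{Ψ|T₂}` agrees with `a g` on `A`.
Then `c⁻¹ a g` fixes `T₁` pointwise, and `g = a⁻¹ · c · (c⁻¹ a g)`.
-/

/-- The pointwise stabilizer `S_{Ψ|T}` of a set `T ⊆ Ψ` in the symmetric group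
`S_Ψ`. -/
def pointwiseStabilizer {Ψ : Type} (T : Set Ψ) : Subgroup (Equiv.Perm Ψ) where
  carrier := {g : Equiv.Perm Ψ | ∀ t ∈ T, g t = t}
  one_mem' := fun t _ => rfl
  mul_mem' := fun {a b} ha hb t ht => by
    simp only [Equiv.Perm.mul_apply, hb t ht, ha t ht]
  inv_mem' := fun {a} ha t ht => by
    have := ha t ht
    exact a.injective (by simpa using this.symm)

open Function Equiv

theorem Set.Finite.exists_injective_forall_notMem {Ψ ι : Type*} [Infinite Ψ] [Finite ι]
    {K : Set Ψ} (hK : K.Finite) : ∃ w : ι → Ψ, Injective w ∧ ∀ i, w i ∉ K := by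
  obtain ⟨e, he⟩ := Countable.exists_injective_nat ι
  let f := hK.infinite_compl.natEmbedding
  exact ⟨fun i => f (e i), Subtype.val_injective.comp (f.injective.comp he), fun i => (f (e i)).2⟩

section PointwiseStabilizer

variable {Ψ : Type}

theorem pointwiseStabilizer_anti {S T : Set Ψ} (h : S ⊆ T) :
    pointwiseStabilizer T ≤ pointwiseStabilizer S :=
  fun _ hg t ht => hg t (h ht)

theorem exists_mem_pointwiseStabilizer_extending_pair {ι : Type*} [Finite ι] {T : Set Ψ}
    (u w : ι → Ψ) (hu : Injective u) (hw : Injective w) (huT : ∀ i, u i ∉ T)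
    (hwT : ∀ i, w i ∉ T) :
    ∃ σ ∈ pointwiseStabilizer T, ∀ i, σ (u i) = w i := by
  classical
  obtain ⟨τ, hτ⟩ := Perm.exists_extending_pair (β := {x // x ∉ T})
    (fun i => ⟨u i, huT i⟩) (fun i => ⟨w i, hwT i⟩)
    (fun _ _ h => hu (congrArg Subtype.val h)) (fun _ _ h => hw (congrArg Subtype.val h))
  refine ⟨Perm.ofSubtype τ, fun t ht => Perm.ofSubtype_apply_of_not_mem τ (not_not.2 ht),
    fun i => ?_⟩
  rw [Perm.ofSubtype_apply_of_mem τ (huT i), hτ]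

variable [Infinite Ψ] {T₁ T₂ : Finset Ψ} {g : Perm Ψ}

theorem exists_mem_pointwiseStabilizer_forall_apply_notMem
    (hg : g ∈ pointwiseStabilizer ((T₁ : Set Ψ) ∩ T₂)) :
    ∃ a ∈ pointwiseStabilizer (T₁ : Set Ψ), ∀ x ∈ T₁, x ∉ T₂ → a (g x) ∉ T₂ := by
  let S := g '' ((T₁ : Set Ψ) \ T₂) \ T₁
  obtain ⟨w, hw, hwK⟩ :=
    ((T₁ : Set Ψ) ∪ T₂).toFinite.exists_injective_forall_notMem (ι := S)
  obtain ⟨a, ha, haS⟩ := exists_mem_pointwiseStabilizer_extending_pair (T := T₁)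
    Subtype.val w Subtype.val_injective hw (fun i => i.2.2) (fun i h => hwK i (.inl h))
  refine ⟨a, ha, fun x hx₁ hx₂ => ?_⟩
  by_cases hgx : g x ∈ T₁
  · rw [ha _ hgx]
    -- `g` fixes `T₁ ∩ T₂` pointwise, so `g x ∈ T₁ ∩ T₂` would force `g x = x`
    exact fun hgx₂ => hx₂ (g.injective (hg _ ⟨hgx, hgx₂⟩) ▸ hgx₂)
  · rw [haS ⟨g x, ⟨x, ⟨hx₁, hx₂⟩, rfl⟩, hgx⟩]
    exact fun h => hwK _ (.inr h)

theorem exists_mul_mul_eq_of_mem_pointwiseStabilizer_inter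
    (hg : g ∈ pointwiseStabilizer ((T₁ : Set Ψ) ∩ T₂)) :
    ∃ a ∈ pointwiseStabilizer (T₁ : Set Ψ), ∃ c ∈ pointwiseStabilizer (T₂ : Set Ψ),
      ∃ h ∈ pointwiseStabilizer (T₁ : Set Ψ), a * c * h = g := by
  obtain ⟨a, ha, haT₂⟩ := exists_mem_pointwiseStabilizer_forall_apply_notMem hg
  obtain ⟨c, hc, hca⟩ := exists_mem_pointwiseStabilizer_extending_pair (T := T₂)
    (fun x : ↥((T₁ : Set Ψ) \ T₂) => (x : Ψ)) (fun x => a (g x)) Subtype.val_injective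
    ((a * g).injective.comp Subtype.val_injective) (fun x => x.2.2)
    (fun x => haT₂ x x.2.1 x.2.2)
  refine ⟨a⁻¹, inv_mem ha, c, hc, c⁻¹ * a * g, fun t ht => ?_, by group⟩
  change c⁻¹ (a (g t)) = t
  rw [Perm.inv_eq_iff_eq]
  by_cases ht₂ : t ∈ T₂
  · rw [hg t ⟨ht, ht₂⟩, ha t ht, hc t ht₂]
  · exact (hca ⟨t, ht, ht₂⟩).symm

end PointwiseStabilizer

/-- **The pointwise stabilizers of two finite sets generate the pointwise
stabilizer of their intersection**: for finite `T₁, T₂ ⊆ Ψ` (with `Ψ`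
infinite), the subgroup of `S_Ψ` generated by `S_{Ψ|T₁} ∪ S_{Ψ|T₂}` equals
`S_{Ψ|T₁ ∩ T₂}`. -/
theorem pointwiseStabilizers_generate
    (Ψ : Type) [Infinite Ψ] (T₁ T₂ : Finset Ψ) :
    Subgroup.closure ((pointwiseStabilizer (T₁ : Set Ψ) : Set (Equiv.Perm Ψ)) ∪
        (pointwiseStabilizer (T₂ : Set Ψ) : Set (Equiv.Perm Ψ))) =
      pointwiseStabilizer ((T₁ : Set Ψ) ∩ (T₂ : Set Ψ)) := by
  rw [Subgroup.closure_union, Subgroup.closure_eq, Subgroup.closure_eq]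
  refine le_antisymm (sup_le (pointwiseStabilizer_anti Set.inter_subset_left)
    (pointwiseStabilizer_anti Set.inter_subset_right)) fun g hg => ?_
  obtain ⟨a, ha, c, hc, h, hh, rfl⟩ := exists_mul_mul_eq_of_mem_pointwiseStabilizer_inter hg
  exact mul_mem (Subgroup.mul_mem_sup ha hc) (Subgroup.mem_sup_left hh)
end

section
/- Let Ψ be an infinite set and U a subgroup of S_Ψ containing the pointwise stabilizer S_{Ψ|T₀} of some finite subset T₀ ⊆ Ψ. Then there exists a unique finite subset T ⊆ Ψ such that S_{Ψ|T} ⊆ U ⊆ S_{Ψ,T}, where S_{Ψ,T} is the setwise stabilizer of T; moreover, for this T, S_{Ψ|T} is a normal subgroup of finite index in U. -/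
/-- The setwise stabilizer `S_{Ψ,T}` of a finite set `T ⊆ Ψ` in the symmetric
group `S_Ψ`. -/
def setwiseStabilizer {Ψ : Type} [DecidableEq Ψ] (T : Finset Ψ) :
    Subgroup (Equiv.Perm Ψ) where
  carrier := {g : Equiv.Perm Ψ | T.image g = T}
  one_mem' := by simp
  mul_mem' := fun {a b} ha hb => by
    have : T.image (⇑(a * b)) = (T.image b).image a := by
      rw [Finset.image_image]; rfl
    simp only [Set.mem_setOf_eq] at *
    rw [this, hb, ha]
  inv_mem' := fun {a} ha => by
    simp only [Set.mem_setOf_eq] at *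
    have h2 : T.image (⇑a⁻¹ ∘ ⇑a) = T := by
      have hid : (⇑a⁻¹ ∘ ⇑a) = id := by funext x; simp
      rw [hid, Finset.image_id]
    calc T.image ⇑a⁻¹ = (T.image ⇑a).image ⇑a⁻¹ := by rw [ha]
    _ = T := by rw [Finset.image_image]; exact h2

/-!
Start from a finite `B` with `S_{Ψ|B} ≤ U`. If some `u ∈ U` sends a point `x ∈ B` outside `B`,
then conjugating by `u` a transposition of two points outside `B` puts into `U` a transposition
of `x` with a point outside `B`; together with `S_{Ψ|B}` it gives `S_{Ψ|B \ {x}} ≤ U`. Shrinking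
`B` in this way must stop, and then `U` preserves `B`. Uniqueness: for `x ∈ T' \ T`, a transposition
of `x` with a point outside `T ∪ T'` fixes `T` pointwise but does not preserve `T'`. Finally
`S_{Ψ|T} ∩ U` is the kernel of the restriction map `U → Sym(T)`, whose image is finite.
-/

open Equiv

section Stabilizers

variable {Ψ : Type}

theorem mem_of_eqOn_of_pointwiseStabilizer_le {U : Subgroup (Perm Ψ)} {B : Set Ψ}
    (hB : pointwiseStabilizer B ≤ U) {g h : Perm Ψ} (hh : h ∈ U) (hgh : Set.EqOn g h B) :
    g ∈ U := by
  have hcoset : h⁻¹ * g ∈ U := hB fun b hb => by simp [hgh hb]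
  simpa using U.mul_mem hh hcoset

variable [DecidableEq Ψ]

theorem swap_mem_pointwiseStabilizer {T : Set Ψ} {x y : Ψ} (hx : x ∉ T) (hy : y ∉ T) :
    swap x y ∈ pointwiseStabilizer T := fun _ ht =>
  swap_apply_of_ne_of_ne (ne_of_mem_of_not_mem ht hx) (ne_of_mem_of_not_mem ht hy)

theorem pointwiseStabilizer_diff_singleton_le_of_swap_mem {U : Subgroup (Perm Ψ)} {B : Set Ψ}
    (hB : pointwiseStabilizer B ≤ U) {x w : Ψ} (hw : w ∉ B) (hxw : swap x w ∈ U) :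
    pointwiseStabilizer (B \ {x}) ≤ U := by
  intro g hg
  by_cases hgx : g x = x
  · refine hB fun b hb => ?_
    by_cases hbx : b = x
    · exact hbx ▸ hgx
    · exact hg b ⟨hb, hbx⟩
  · have hgxB : g x ∉ B := fun hmem => hgx (g.injective (hg (g x) ⟨hmem, hgx⟩))
    -- `g` agrees on `B` with `swap w (g x) * swap x w`
    refine mem_of_eqOn_of_pointwiseStabilizer_le hB
      (U.mul_mem (hB (swap_mem_pointwiseStabilizer hw hgxB)) hxw) fun b hb => ?_
    by_cases hbx : b = x
    · simp [hbx]
    · have hbw : b ≠ w := ne_of_mem_of_not_mem hb hw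
      rw [hg b ⟨hb, hbx⟩, Perm.mul_apply, swap_apply_of_ne_of_ne hbx hbw,
        swap_apply_of_ne_of_ne hbw (ne_of_mem_of_not_mem hb hgxB)]

theorem pointwiseStabilizer_diff_singleton_le [Infinite Ψ] {U : Subgroup (Perm Ψ)} {B : Set Ψ}
    (hBfin : B.Finite) (hB : pointwiseStabilizer B ≤ U) {u : Perm Ψ} (hu : u ∈ U) {x : Ψ}
    (hux : u x ∉ B) : pointwiseStabilizer (B \ {x}) ≤ U := by
  obtain ⟨w, hw⟩ := (hBfin.union (hBfin.image ⇑u⁻¹)).exists_notMem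
  have hwB : w ∉ B := hw ∘ Or.inl
  have huwB : u w ∉ B := fun h => hw (Or.inr ⟨u w, h, by simp⟩)
  have hswap : swap x w = u⁻¹ * swap (u x) (u w) * u := by
    simpa using swap_apply_apply u⁻¹ (u x) (u w)
  refine pointwiseStabilizer_diff_singleton_le_of_swap_mem hB hwB ?_
  rw [hswap]
  exact U.mul_mem (U.mul_mem (U.inv_mem hu) (hB (swap_mem_pointwiseStabilizer hux huwB))) hu

theorem mem_setwiseStabilizer_iff_mapsTo {T : Finset Ψ} {g : Perm Ψ} :
    g ∈ setwiseStabilizer T ↔ Set.MapsTo g T T := by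
  change T.image g = T ↔ _
  refine ⟨fun h t ht => h ▸ Finset.mem_image_of_mem g ht, fun h => ?_⟩
  exact Finset.eq_of_subset_of_card_le (Finset.image_subset_iff.2 h)
    (Finset.card_image_of_injective T g.injective).ge

theorem apply_mem_iff_of_mem_setwiseStabilizer {T : Finset Ψ} {g : Perm Ψ}
    (hg : g ∈ setwiseStabilizer T) {x : Ψ} : g x ∈ T ↔ x ∈ T := by
  refine ⟨fun hgx => ?_, fun hx => mem_setwiseStabilizer_iff_mapsTo.1 hg hx⟩
  simpa using mem_setwiseStabilizer_iff_mapsTo.1 ((setwiseStabilizer T).inv_mem hg) hgx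

theorem exists_pointwiseStabilizer_le_le_setwiseStabilizer [Infinite Ψ] {U : Subgroup (Perm Ψ)}
    (B : Finset Ψ) (hB : pointwiseStabilizer (B : Set Ψ) ≤ U) :
    ∃ T : Finset Ψ, pointwiseStabilizer (T : Set Ψ) ≤ U ∧ U ≤ setwiseStabilizer T := by
  induction B using Finset.strongInduction with
  | H B ih =>
  by_cases hmaps : ∀ u ∈ U, ∀ x ∈ B, u x ∈ B
  · exact ⟨B, hB, fun u hu => mem_setwiseStabilizer_iff_mapsTo.2 (hmaps u hu)⟩
  · push Not at hmaps
    obtain ⟨u, hu, x, hx, hux⟩ := hmaps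
    refine ih (B.erase x) (B.erase_ssubset hx) ?_
    rw [Finset.coe_erase]
    exact pointwiseStabilizer_diff_singleton_le B.finite_toSet hB hu hux

theorem subset_of_pointwiseStabilizer_le_setwiseStabilizer [Infinite Ψ] {T T' : Finset Ψ}
    (h : pointwiseStabilizer (T : Set Ψ) ≤ setwiseStabilizer T') : T' ⊆ T := by
  intro x hxT'
  by_contra hxT
  obtain ⟨y, hy⟩ := Infinite.exists_notMem_finset (T ∪ T')
  rw [Finset.mem_union, not_or] at hy
  have hswap := mem_setwiseStabilizer_iff_mapsTo.1
    (h (swap_mem_pointwiseStabilizer (T := (T : Set Ψ)) hxT hy.1)) hxT'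
  rw [swap_apply_left] at hswap
  exact hy.2 hswap

def permRestrict {T : Finset Ψ} {U : Subgroup (Perm Ψ)} (hU : U ≤ setwiseStabilizer T) :
    U →* Perm T where
  toFun u := (u : Perm Ψ).subtypePerm fun _ => apply_mem_iff_of_mem_setwiseStabilizer (hU u.2)
  map_one' := rfl
  map_mul' _ _ := rfl

theorem ker_permRestrict {T : Finset Ψ} {U : Subgroup (Perm Ψ)} (hU : U ≤ setwiseStabilizer T) :
    (permRestrict hU).ker = (pointwiseStabilizer (T : Set Ψ)).subgroupOf U := by
  ext u
  simp only [MonoidHom.mem_ker, Perm.ext_iff, Subtype.ext_iff, Subgroup.mem_subgroupOf]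
  exact Subtype.forall

end Stabilizers

/-- **Description of the open subgroups of `S_Ψ`.**  Let `U` be a subgroup of
`S_Ψ` containing the pointwise stabilizer of some finite set `T₀` (`U` is
open).  Then there is a unique finite `T ⊆ Ψ` with
`S_{Ψ|T} ≤ U ≤ S_{Ψ,T}`; moreover for this `T`, the subgroup `S_{Ψ|T}` is
normal in `U` of finite index (finite index expressed by
`relindex ≠ 0`). -/
theorem open_subgroup_between_pointwise_and_setwise_stabilizer
    (Ψ : Type) [Infinite Ψ] [DecidableEq Ψ]
    (U : Subgroup (Equiv.Perm Ψ))
    (hopen : ∃ T₀ : Finset Ψ, pointwiseStabilizer (T₀ : Set Ψ) ≤ U) :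
    ∃ T : Finset Ψ,
      (pointwiseStabilizer (T : Set Ψ) ≤ U ∧ U ≤ setwiseStabilizer T) ∧
      (∀ T' : Finset Ψ,
        pointwiseStabilizer (T' : Set Ψ) ≤ U ∧ U ≤ setwiseStabilizer T' → T' = T) ∧
      (((pointwiseStabilizer (T : Set Ψ)).subgroupOf U).Normal) ∧
      (pointwiseStabilizer (T : Set Ψ)).relIndex U ≠ 0 := by
  obtain ⟨T₀, hT₀⟩ := hopen
  obtain ⟨T, hTU, hUT⟩ := exists_pointwiseStabilizer_le_le_setwiseStabilizer T₀ hT₀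
  refine ⟨T, ⟨hTU, hUT⟩, fun T' ⟨hT'U, hUT'⟩ => ?_, ?_, ?_⟩
  · exact (subset_of_pointwiseStabilizer_le_setwiseStabilizer (hTU.trans hUT')).antisymm
      (subset_of_pointwiseStabilizer_le_setwiseStabilizer (hT'U.trans hUT))
  · rw [← ker_permRestrict hUT]
    exact (permRestrict hUT).normal_ker
  · rw [Subgroup.relIndex, ← ker_permRestrict hUT]
    exact Subgroup.FiniteIndex.index_ne_zero
end

section
/- Let Ψ be an infinite set and U a proper subgroup of S_Ψ containing the pointwise stabilizer S_{Ψ|T} of some finite subset T ⊆ Ψ. Then U has infinite index in S_Ψ. -/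
section Aux

variable {Ψ : Type}

/-- A fresh injection on a finite set, with values in a prescribed infinite set. -/
lemma exists_fresh_fun (F : Finset Ψ) (D : Set Ψ) (hD : D.Infinite) :
    ∃ φ : Ψ → Ψ, Set.InjOn φ ↑F ∧ ∀ x ∈ F, φ x ∈ D := by
  classical
  obtain emb := hD.natEmbedding
  let e := Fintype.equivFin ↥(↑F : Set Ψ)
  refine ⟨fun x => if h : x ∈ F then (emb (e ⟨x, by simpa using h⟩) : Ψ) else x, ?_, ?_⟩
  · intro x hx y hy hxy
    simp only [Set.mem_setOf_eq, Finset.mem_coe] at hx hy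
    simp only [dif_pos hx, dif_pos hy] at hxy
    have h1 := emb.injective (Subtype.ext hxy)
    have h2 : (⟨x, by simpa using hx⟩ : ↥(↑F : Set Ψ)) = ⟨y, by simpa using hy⟩ :=
      e.injective (Fin.val_injective h1)
    exact congrArg Subtype.val h2
  · intro x hx
    simp only [dif_pos hx]
    exact (emb _).2

/-- Extend a finite injective map whose image is disjoint from its domain to a
permutation which moves nothing else. -/
lemma exists_perm_eqOn (φ : Ψ → Ψ) :
    ∀ F : Finset Ψ, Set.InjOn φ ↑F → (∀ x ∈ F, ∀ y ∈ F, φ x ≠ y) →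
    ∃ w : Equiv.Perm Ψ, (∀ x ∈ F, w x = φ x) ∧
      ∀ z, z ∉ F → (∀ x ∈ F, φ x ≠ z) → w z = z := by
  classical
  intro F
  induction F using Finset.induction_on with
  | empty => exact fun _ _ => ⟨1, by simp, by simp⟩
  | @insert x F hx ih =>
    intro hinj hdisj
    obtain ⟨w', hw'1, hw'2⟩ := ih
      (hinj.mono (by simp [Finset.coe_insert, Set.subset_insert]))
      (fun a ha b hb => hdisj a (Finset.mem_insert_of_mem ha) b (Finset.mem_insert_of_mem hb))
    have hw'x : w' x = x := hw'2 x hx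
      (fun a ha => hdisj a (Finset.mem_insert_of_mem ha) x (Finset.mem_insert_self x F))
    refine ⟨Equiv.swap x (φ x) * w', ?_, ?_⟩
    · intro y hy
      rcases Finset.mem_insert.1 hy with rfl | hy
      · simp [Equiv.Perm.mul_apply, hw'x]
      · have h1 : w' y = φ y := hw'1 y hy
        have h2 : φ y ≠ x := hdisj y (Finset.mem_insert_of_mem hy) x (Finset.mem_insert_self x F)
        have h3 : φ y ≠ φ x := fun h => hx (by
          have := hinj (by simp [hy] : y ∈ (↑(insert x F) : Set Ψ))
            (by simp : x ∈ (↑(insert x F) : Set Ψ)) h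
          rwa [this] at hy)
        simp [Equiv.Perm.mul_apply, h1, Equiv.swap_apply_of_ne_of_ne h2 h3]
    · intro z hz hz2
      have hzF : z ∉ F := fun h => hz (Finset.mem_insert_of_mem h)
      have h1 : w' z = z := hw'2 z hzF (fun a ha => hz2 a (Finset.mem_insert_of_mem ha))
      have h2 : z ≠ x := fun h => hz (h ▸ Finset.mem_insert_self x F)
      have h3 : z ≠ φ x := fun h => hz2 x (Finset.mem_insert_self x F) h.symm
      simp [Equiv.Perm.mul_apply, h1, Equiv.swap_apply_of_ne_of_ne h2 h3]

/-- Any finite injective map extends to a permutation. -/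
lemma exists_perm_extend (F : Finset Ψ) [Infinite Ψ] (φ : Ψ → Ψ)
    (hinj : Set.InjOn φ ↑F) :
    ∃ w : Equiv.Perm Ψ, ∀ x ∈ F, w x = φ x := by
  classical
  -- fresh intermediate set
  have hInf : ((↑(F ∪ F.image φ) : Set Ψ)ᶜ).Infinite :=
    Set.Finite.infinite_compl (F ∪ F.image φ).finite_toSet
  obtain ⟨m, hm_inj, hm_mem⟩ := exists_fresh_fun F _ hInf
  have hm_notF : ∀ x ∈ F, m x ∉ F := by
    intro x hxF h
    exact (hm_mem x hxF) (by simp [Finset.mem_union, h])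
  have hm_notφ : ∀ x ∈ F, ∀ y ∈ F, m x ≠ φ y := by
    intro x hxF y hyF h
    exact (hm_mem x hxF) (by
      simp only [Finset.coe_union, Set.mem_union, Finset.mem_coe, Finset.mem_image]
      exact Or.inr ⟨y, hyF, h.symm⟩)
  obtain ⟨w1, hw1, -⟩ := exists_perm_eqOn m F hm_inj (by
    intro x hx y hy h
    exact hm_notF x hx (h ▸ hy))
  -- second step: from m-image to φ-image
  obtain ⟨w2, hw2, -⟩ :=
    exists_perm_eqOn (fun z => φ (w1.symm z)) (F.image w1)
      (by
        intro a ha b hb hab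
        simp only [Finset.coe_image, Set.mem_image, Finset.mem_coe] at ha hb
        obtain ⟨a0, ha0, rfl⟩ := ha
        obtain ⟨b0, hb0, rfl⟩ := hb
        simp only [Equiv.symm_apply_apply] at hab
        exact congrArg _ (hinj (Finset.mem_coe.2 ha0) (Finset.mem_coe.2 hb0) hab))
      (by
        intro a ha b hb h
        simp only [Finset.mem_image] at ha hb
        obtain ⟨a0, ha0, rfl⟩ := ha
        obtain ⟨b0, hb0, rfl⟩ := hb
        simp only [Equiv.symm_apply_apply] at h
        rw [hw1 b0 hb0] at h
        exact hm_notφ b0 hb0 a0 ha0 h.symm)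
  refine ⟨w2 * w1, fun x hxF => ?_⟩
  have hmem : w1 x ∈ F.image w1 := Finset.mem_image_of_mem _ hxF
  simp only [Equiv.Perm.mul_apply]
  rw [hw2 _ hmem]
  simp

end Aux

/-- **Every proper open subgroup of `S_Ψ` has infinite index**: if `Ψ` is
infinite and `U` is a proper subgroup of `S_Ψ` containing the pointwise
stabilizer of some finite `T ⊆ Ψ`, then the index of `U` in `S_Ψ` is infinite
(`index = 0` in Mathlib's convention). -/
theorem proper_open_subgroup_has_infinite_index
    (Ψ : Type) [Infinite Ψ]
    (U : Subgroup (Equiv.Perm Ψ))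
    (hU : U ≠ ⊤)
    (hopen : ∃ T : Finset Ψ, pointwiseStabilizer (T : Set Ψ) ≤ U) :
    U.index = 0 := by
  classical
  obtain ⟨T, hT⟩ := hopen
  -- membership in U only depends on the restriction to T
  have key : ∀ g h : Equiv.Perm Ψ, (∀ t ∈ T, g t = h t) → g ∈ U → h ∈ U := by
    intro g h hgh hg
    have hmem : g⁻¹ * h ∈ pointwiseStabilizer (T : Set Ψ) := by
      intro t ht
      simp only [Equiv.Perm.mul_apply]
      rw [← hgh t (Finset.mem_coe.1 ht)]
      simp
    have := U.mul_mem hg (hT hmem)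
    simpa using this
  by_cases hA : ∀ t ∈ T, ∃ u ∈ U, u t ∉ T
  · -- every point of T can be moved out of T : then U = ⊤, contradiction
    exfalso
    apply hU
    rw [Subgroup.eq_top_iff']
    -- Step 1: there is u₀ ∈ U moving all of T out of T
    have step2 : ∃ u : Equiv.Perm Ψ, u ∈ U ∧ ∀ t ∈ T, u t ∉ T := by
      have aux : ∀ n : ℕ, ∀ u : Equiv.Perm Ψ, u ∈ U →
          (T.filter (fun t => u t ∈ T)).card ≤ n →
          ∃ v : Equiv.Perm Ψ, v ∈ U ∧ ∀ t ∈ T, v t ∉ T := by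
        intro n
        induction n with
        | zero =>
          intro u hu hc
          refine ⟨u, hu, fun t ht h => ?_⟩
          have hmem : t ∈ T.filter (fun t => u t ∈ T) := Finset.mem_filter.2 ⟨ht, h⟩
          have := Finset.card_pos.2 ⟨t, hmem⟩
          omega
        | succ n ih =>
          intro u hu hc
          rcases Finset.eq_empty_or_nonempty (T.filter (fun t => u t ∈ T)) with he | ⟨t0, ht0⟩
          · refine ⟨u, hu, fun t ht h => ?_⟩
            have hmem : t ∈ T.filter (fun t => u t ∈ T) := Finset.mem_filter.2 ⟨ht, h⟩
            simp [he] at hmem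
          · obtain ⟨ht0T, hst⟩ := Finset.mem_filter.1 ht0
            obtain ⟨u', hu', hus⟩ := hA (u t0) hst
            set F : Finset Ψ := (T.image u).filter (· ∉ T) with hF
            -- fresh targets avoiding T, u'⁻¹(T) and F
            have hDinf : ((↑T ∪ (⇑u' ⁻¹' ↑T) ∪ ↑F : Set Ψ)ᶜ).Infinite :=
              Set.Finite.infinite_compl
                (((T.finite_toSet.union (T.finite_toSet.preimage u'.injective.injOn))).union
                  F.finite_toSet)
            obtain ⟨φ, hφinj, hφmem⟩ := exists_fresh_fun F _ hDinf
            have hφT : ∀ x ∈ F, φ x ∉ T := fun x hx h =>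
              (hφmem x hx) (Or.inl (Or.inl (Finset.mem_coe.2 h)))
            have hφu' : ∀ x ∈ F, u' (φ x) ∉ T := fun x hx h =>
              (hφmem x hx) (Or.inl (Or.inr h))
            have hφF : ∀ x ∈ F, φ x ∉ F := fun x hx h =>
              (hφmem x hx) (Or.inr (Finset.mem_coe.2 h))
            have hFnT : ∀ x ∈ F, x ∉ T := fun x hx => by
              simpa using (Finset.mem_filter.1 hx).2
            obtain ⟨w, hw1, hw2⟩ := exists_perm_eqOn φ F hφinj
              (fun x hx y hy h => hφF x hx (h ▸ hy))
            have hwT : ∀ t ∈ T, w t = t := fun t ht =>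
              hw2 t (fun h => hFnT t h ht) (fun x hx h => hφT x hx (h ▸ ht))
            have hwU : w ∈ U := hT (fun t ht => hwT t (Finset.mem_coe.1 ht))
            refine ih (u' * w * u) (U.mul_mem (U.mul_mem hu' hwU) hu) ?_
            have hsub : T.filter (fun t => (u' * w * u) t ∈ T) ⊆
                (T.filter (fun t => u t ∈ T)).erase t0 := by
              intro t ht
              obtain ⟨htT, hvt⟩ := Finset.mem_filter.1 ht
              simp only [Equiv.Perm.mul_apply] at hvt
              have huT : u t ∈ T := by
                by_contra huc
                have hxF : u t ∈ F := Finset.mem_filter.2 ⟨Finset.mem_image_of_mem u htT,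
                  by simpa using huc⟩
                rw [hw1 (u t) hxF] at hvt
                exact hφu' (u t) hxF hvt
              have hne : t ≠ t0 := by
                intro h
                subst h
                rw [hwT (u t) huT] at hvt
                exact hus hvt
              exact Finset.mem_erase.2 ⟨hne, Finset.mem_filter.2 ⟨htT, huT⟩⟩
            calc (T.filter (fun t => (u' * w * u) t ∈ T)).card
                ≤ ((T.filter (fun t => u t ∈ T)).erase t0).card := Finset.card_le_card hsub
              _ = (T.filter (fun t => u t ∈ T)).card - 1 := Finset.card_erase_of_mem ht0
              _ ≤ n := by omega
      exact aux T.card 1 U.one_mem (by simpa using Finset.card_filter_le T _)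
    obtain ⟨u0, hu0U, hu0⟩ := step2
    -- Step 2: every injection of T with values outside T is realized by U
    have claim1 : ∀ c : Ψ → Ψ, Set.InjOn c ↑T → (∀ t ∈ T, c t ∉ T) →
        ∃ u : Equiv.Perm Ψ, u ∈ U ∧ ∀ t ∈ T, u t = c t := by
      intro c hcinj hcT
      have hDinf : ((↑(T ∪ T.image u0 ∪ T.image c) : Set Ψ)ᶜ).Infinite :=
        Set.Finite.infinite_compl (T ∪ T.image u0 ∪ T.image c).finite_toSet
      obtain ⟨d, hdinj, hdmem⟩ := exists_fresh_fun T _ hDinf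
      have hdT : ∀ t ∈ T, d t ∉ T := fun t ht h =>
        (hdmem t ht) (by simp [Finset.mem_union, h])
      have hdu0 : ∀ t ∈ T, ∀ t' ∈ T, d t ≠ u0 t' := fun t ht t' ht' h =>
        (hdmem t ht) (by
          simp only [Finset.coe_union, Set.mem_union, Finset.mem_coe, Finset.mem_image]
          exact Or.inl (Or.inr ⟨t', ht', h.symm⟩))
      have hdc : ∀ t ∈ T, ∀ t' ∈ T, d t ≠ c t' := fun t ht t' ht' h =>
        (hdmem t ht) (by
          simp only [Finset.coe_union, Set.mem_union, Finset.mem_coe, Finset.mem_image]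
          exact Or.inr ⟨t', ht', h.symm⟩)
      -- first permutation: sends u0 t to d t, fixes T
      obtain ⟨w1, hw11, hw12⟩ :=
        exists_perm_eqOn (fun x => d (u0.symm x)) (T.image u0)
          (by
            intro a ha b hb hab
            simp only [Finset.coe_image, Set.mem_image, Finset.mem_coe] at ha hb
            obtain ⟨a0, ha0, rfl⟩ := ha
            obtain ⟨b0, hb0, rfl⟩ := hb
            simp only [Equiv.symm_apply_apply] at hab
            exact congrArg _ (hdinj (Finset.mem_coe.2 ha0) (Finset.mem_coe.2 hb0) hab))
          (by
            intro a ha b hb h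
            simp only [Finset.mem_image] at ha hb
            obtain ⟨a0, ha0, rfl⟩ := ha
            obtain ⟨b0, hb0, rfl⟩ := hb
            simp only [Equiv.symm_apply_apply] at h
            exact hdu0 a0 ha0 b0 hb0 h)
      have hw1T : ∀ t ∈ T, w1 t = t := by
        intro t ht
        refine hw12 t ?_ ?_
        · intro h
          obtain ⟨a0, ha0, hea⟩ := Finset.mem_image.1 h
          exact hu0 a0 ha0 (hea ▸ ht)
        · intro x hx h
          obtain ⟨a0, ha0, rfl⟩ := Finset.mem_image.1 hx
          simp only [Equiv.symm_apply_apply] at h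
          exact hdT a0 ha0 (h ▸ ht)
      have hw1U : w1 ∈ U := hT (fun t ht => hw1T t (Finset.mem_coe.1 ht))
      have hu1 : ∀ t ∈ T, (w1 * u0) t = d t := by
        intro t ht
        simp only [Equiv.Perm.mul_apply]
        rw [hw11 (u0 t) (Finset.mem_image_of_mem _ ht)]
        simp
      -- second permutation: sends d t to c t, fixes T
      obtain ⟨w2, hw21, hw22⟩ :=
        exists_perm_eqOn (fun x => c ((w1 * u0).symm x)) (T.image (w1 * u0))
          (by
            intro a ha b hb hab
            simp only [Finset.coe_image, Set.mem_image, Finset.mem_coe] at ha hb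
            obtain ⟨a0, ha0, rfl⟩ := ha
            obtain ⟨b0, hb0, rfl⟩ := hb
            simp only [Equiv.symm_apply_apply] at hab
            exact congrArg _ (hcinj (Finset.mem_coe.2 ha0) (Finset.mem_coe.2 hb0) hab))
          (by
            intro a ha b hb h
            simp only [Finset.mem_image] at ha hb
            obtain ⟨a0, ha0, rfl⟩ := ha
            obtain ⟨b0, hb0, rfl⟩ := hb
            simp only [Equiv.symm_apply_apply] at h
            rw [hu1 b0 hb0] at h
            exact hdc b0 hb0 a0 ha0 h.symm)
      have hw2T : ∀ t ∈ T, w2 t = t := by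
        intro t ht
        refine hw22 t ?_ ?_
        · intro h
          obtain ⟨a0, ha0, hea⟩ := Finset.mem_image.1 h
          rw [hu1 a0 ha0] at hea
          exact hdT a0 ha0 (hea ▸ ht)
        · intro x hx h
          obtain ⟨a0, ha0, rfl⟩ := Finset.mem_image.1 hx
          simp only [Equiv.symm_apply_apply] at h
          exact hcT a0 ha0 (h ▸ ht)
      have hw2U : w2 ∈ U := hT (fun t ht => hw2T t (Finset.mem_coe.1 ht))
      refine ⟨w2 * (w1 * u0), U.mul_mem hw2U (U.mul_mem hw1U hu0U), ?_⟩
      intro t ht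
      have h0 : (w2 * (w1 * u0)) t = w2 ((w1 * u0) t) := rfl
      rw [h0, hw21 ((w1 * u0) t) (Finset.mem_image_of_mem _ ht), Equiv.symm_apply_apply]
    -- Step 3: every g is in U
    intro g
    -- a fresh injection c avoiding T and g(T)
    have hD1inf : ((↑(T ∪ T.image g) : Set Ψ)ᶜ).Infinite :=
      Set.Finite.infinite_compl (T ∪ T.image g).finite_toSet
    obtain ⟨c, hcinj, hcmem⟩ := exists_fresh_fun T _ hD1inf
    have hcT : ∀ t ∈ T, c t ∉ T := fun t ht h =>
      (hcmem t ht) (by simp [Finset.mem_union, h])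
    have hcg : ∀ t ∈ T, ∀ t' ∈ T, c t ≠ g t' := fun t ht t' ht' h =>
      (hcmem t ht) (by
        simp only [Finset.coe_union, Set.mem_union, Finset.mem_coe, Finset.mem_image]
        exact Or.inr ⟨t', ht', h.symm⟩)
    obtain ⟨uc, hucU, huc⟩ := claim1 c hcinj hcT
    -- a fresh injection c'' avoiding T, g(T) and c(T)
    have hD2inf : ((↑(T ∪ T.image g ∪ T.image uc) : Set Ψ)ᶜ).Infinite :=
      Set.Finite.infinite_compl (T ∪ T.image g ∪ T.image uc).finite_toSet
    obtain ⟨c'', hc2inj, hc2mem⟩ := exists_fresh_fun T _ hD2inf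
    have hc2T : ∀ t ∈ T, c'' t ∉ T := fun t ht h =>
      (hc2mem t ht) (by simp [Finset.mem_union, h])
    have hc2g : ∀ t ∈ T, ∀ t' ∈ T, c'' t ≠ g t' := fun t ht t' ht' h =>
      (hc2mem t ht) (by
        simp only [Finset.coe_union, Set.mem_union, Finset.mem_coe, Finset.mem_image]
        exact Or.inl (Or.inr ⟨t', ht', h.symm⟩))
    -- the permutation h : t ↦ c'' t, uc t ↦ g t
    have hucT : ∀ x, x ∈ T.image uc → x ∉ T := by
      intro x hx
      obtain ⟨a0, ha0, rfl⟩ := Finset.mem_image.1 hx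
      rw [huc a0 ha0]
      exact hcT a0 ha0
    obtain ⟨h, hh⟩ := exists_perm_extend (T ∪ T.image uc)
      (fun x => if x ∈ T then c'' x else g (uc.symm x))
      (by
        intro a ha b hb hab
        dsimp only at hab
        simp only [Finset.coe_union, Set.mem_union, Finset.mem_coe] at ha hb
        rcases ha with ha | ha <;> rcases hb with hb | hb
        · rw [if_pos ha, if_pos hb] at hab
          exact hc2inj (Finset.mem_coe.2 ha) (Finset.mem_coe.2 hb) hab
        · rw [if_pos ha, if_neg (hucT b hb)] at hab
          obtain ⟨b0, hb0, rfl⟩ := Finset.mem_image.1 hb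
          simp only [Equiv.symm_apply_apply] at hab
          exact absurd hab (hc2g a ha b0 hb0)
        · rw [if_neg (hucT a ha), if_pos hb] at hab
          obtain ⟨a0, ha0, rfl⟩ := Finset.mem_image.1 ha
          simp only [Equiv.symm_apply_apply] at hab
          exact absurd hab.symm (hc2g b hb a0 ha0)
        · rw [if_neg (hucT a ha), if_neg (hucT b hb)] at hab
          obtain ⟨a0, ha0, rfl⟩ := Finset.mem_image.1 ha
          obtain ⟨b0, hb0, rfl⟩ := Finset.mem_image.1 hb
          simp only [Equiv.symm_apply_apply] at hab
          exact congrArg _ (g.injective hab))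
    have hhT : ∀ t ∈ T, h t = c'' t := by
      intro t ht
      rw [hh t (Finset.mem_union_left _ ht), if_pos ht]
    -- h ∈ U since it agrees with some element of U on T
    obtain ⟨u'', hu''U, hu''⟩ := claim1 c'' hc2inj hc2T
    have hhU : h ∈ U := key u'' h (fun t ht => by rw [hu'' t ht, hhT t ht]) hu''U
    -- h * uc agrees with g on T
    refine key (h * uc) g ?_ (U.mul_mem hhU hucU)
    intro t ht
    have h1 : (h * uc) t = h (uc t) := rfl
    have h2 : uc t ∈ T.image uc := Finset.mem_image_of_mem _ ht
    rw [h1, hh (uc t) (Finset.mem_union_right _ h2), if_neg (hucT _ h2),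
      Equiv.symm_apply_apply]
  · -- some point of T always stays in T : infinitely many cosets via swaps
    push_neg at hA
    obtain ⟨t0, ht0T, ht0⟩ := hA
    have hCinf : ((↑T : Set Ψ)ᶜ).Infinite := Set.Finite.infinite_compl T.finite_toSet
    obtain emb := hCinf.natEmbedding
    have hinj : Function.Injective
        (fun i : ℕ => (QuotientGroup.mk (Equiv.swap t0 (emb i : Ψ)) : Equiv.Perm Ψ ⧸ U)) := by
      intro i j hij
      by_contra hne
      have hmem : (Equiv.swap t0 (emb i : Ψ))⁻¹ * Equiv.swap t0 (emb j : Ψ) ∈ U :=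
        QuotientGroup.eq.1 hij
      have hjT : (emb j : Ψ) ∉ T := (emb j).2
      have hji : (emb j : Ψ) ≠ t0 := fun h => hjT (h ▸ ht0T)
      have hjine : (emb j : Ψ) ≠ (emb i : Ψ) := fun h =>
        hne ((emb.injective (Subtype.ext h)).symm)
      have happ : ((Equiv.swap t0 (emb i : Ψ))⁻¹ * Equiv.swap t0 (emb j : Ψ)) t0
          = (emb j : Ψ) := by
        simp only [Equiv.Perm.mul_apply, Equiv.Perm.inv_def, Equiv.symm_swap]
        rw [Equiv.swap_apply_left, Equiv.swap_apply_of_ne_of_ne hji hjine]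
      have := ht0 _ hmem
      rw [happ] at this
      exact hjT this
    have : Infinite (Equiv.Perm Ψ ⧸ U) := Infinite.of_injective _ hinj
    exact Nat.card_eq_zero_of_infinite
end

section
/- Let K be a field and G a finite group acting faithfully on K by field automorphisms. Let V be a K-semilinear representation of G, i.e. a K-vector space with an action of G by additive automorphisms satisfying g•(c•v) = (g•c)•(g•v) for all g ∈ G, c ∈ K, v ∈ V. Then the natural K-linear map K ⊗_{K^G} V^G → V, c ⊗ v ↦ c•v, is bijective; in particular, V is spanned over K by its G-fixed vectors. -/
set_option synthInstance.maxHeartbeats 1000000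
set_option maxHeartbeats 1000000

/-- The group structure on `A ≃+ A` (composition) that older Mathlib provided as
`AddAut.group`; current Mathlib makes `AddAut A` an additive group instead. -/
instance AddAut.group (A : Type*) [Add A] : Group (A ≃+ A) where
  mul g h := AddEquiv.trans h g
  one := AddEquiv.refl _
  inv := AddEquiv.symm
  mul_assoc _ _ _ := rfl
  one_mul _ := rfl
  mul_one _ := rfl
  inv_mul_cancel := AddEquiv.self_trans_symm

/-- The fixed subfield `K^G` of an action of `G` on a field `K` by field
automorphisms. -/
def fixedSubfield (K : Type) [Field K] (G : Type) [Group G]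
    (act : G →* (K ≃+* K)) : Subfield K where
  carrier := {c | ∀ g, act g c = c}
  mul_mem' := fun {a b} ha hb g => by rw [map_mul, ha g, hb g]
  one_mem' := fun g => map_one _
  add_mem' := fun {a b} ha hb g => by rw [map_add, ha g, hb g]
  zero_mem' := fun g => map_zero _
  neg_mem' := fun {a} ha g => by rw [map_neg, ha g]
  inv_mem' := fun a ha g => by rw [map_inv₀, ha g]

/-- The fixed vectors `V^G` of a `K`-semilinear representation `(V, ρ)` of `G`,
as a `K^G`-submodule of `V`. -/
def fixedSubmodule (K : Type) [Field K] (G : Type) [Group G] (act : G →* (K ≃+* K))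
    (V : Type) [AddCommGroup V] [Module K V] (ρ : G →* (V ≃+ V))
    (hsemi : ∀ (g : G) (c : K) (v : V), ρ g (c • v) = act g c • ρ g v) :
    Submodule (fixedSubfield K G act) V where
  carrier := {v | ∀ g, ρ g v = v}
  add_mem' := fun {a b} ha hb g => by rw [map_add, ha g, hb g]
  zero_mem' := fun g => map_zero _
  smul_mem' := fun c v hv g => by
    have : (c • v : V) = (↑c : K) • v := rfl
    rw [this, hsemi g ↑c v, c.2 g, hv g]

/-- The natural `K^G`-linear map `K ⊗_{K^G} V^G → V`, `c ⊗ v ↦ c • v`. -/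
noncomputable def natTensorMap (K : Type) [Field K] (G : Type) [Group G]
    (act : G →* (K ≃+* K))
    (V : Type) [AddCommGroup V] [Module K V] (ρ : G →* (V ≃+ V))
    (hsemi : ∀ (g : G) (c : K) (v : V), ρ g (c • v) = act g c • ρ g v) :
    TensorProduct (fixedSubfield K G act) K (fixedSubmodule K G act V ρ hsemi)
      →ₗ[fixedSubfield K G act] V :=
  TensorProduct.lift (LinearMap.mk₂ (fixedSubfield K G act)
    (fun (c : K) (v : fixedSubmodule K G act V ρ hsemi) => c • (v : V))
    (fun m₁ m₂ v => add_smul m₁ m₂ (v : V))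
    (fun a m v => by
      show ((a • m) : K) • (v : V) = a • (m • (v : V))
      have h1 : (a • m : K) = (↑a : K) * m := rfl
      have h2 : a • (m • (v : V)) = (↑a : K) • (m • (v : V)) := rfl
      rw [h1, h2, mul_smul])
    (fun m v₁ v₂ => by
      show m • ((v₁ + v₂ : _) : V) = m • (v₁ : V) + m • (v₂ : V)
      rw [Submodule.coe_add, smul_add])
    (fun a m v => by
      show m • ((a • v : _) : V) = a • (m • (v : V))
      have h1 : ((a • v : _) : V) = (↑a : K) • (v : V) := rfl
      have h2 : a • (m • (v : V)) = (↑a : K) • (m • (v : V)) := rfl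
      rw [h1, h2, smul_comm]))

/-! Everything rests on Dedekind's independence of characters: faithfulness makes the `act g`
distinct characters `K →* K`, so if `∑ g, act g a • x g = 0` for every `a : K`, with `x g` in any
`K`-vector space, then all `x g = 0` (test against linear functionals).

The vectors `∑ g, ρ g (a • v) = ∑ g, act g a • ρ g v` are `G`-fixed. Modulo the `K`-span of `V^G`
they vanish for every `a`, so Dedekind kills the class of `v = ρ 1 v`: the map is onto.

For injectivity it suffices that a `K^G`-basis `m` of `V^G` stays `K`-independent. Applying
`∑ g, ρ g (a • ·)` to a relation `∑ c i • m i = 0` gives the `K^G`-relation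
`∑ Tr (a * c i) • m i = 0`, so `Tr (a * c i) = 0` for all `a`, and the trace form is nondegenerate
by Dedekind once more. -/

@[simp]
theorem AddAut.group_one_apply {A : Type*} [Add A] (a : A) : (1 : A ≃+ A) a = a := rfl

@[simp]
theorem AddAut.group_mul_apply {A : Type*} [Add A] (e f : A ≃+ A) (a : A) :
    (e * f) a = e (f a) := rfl

theorem eq_zero_of_forall_sum_monoidHom_smul_eq_zero {M L V ι : Type*} [Monoid M] [Field L]
    [AddCommGroup V] [Module L V] [Fintype ι] {χ : ι → M →* L} (hχ : Function.Injective χ)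
    {x : ι → V} (h : ∀ a, ∑ i, χ i a • x i = 0) : x = 0 := by
  funext i
  refine (Module.forall_dual_apply_eq_zero_iff L (x i)).1 fun f => ?_
  refine Fintype.linearIndependent_iff.1 ((linearIndependent_monoidHom M L).comp χ hχ)
    (fun j => f (x j)) ?_ i
  funext a
  simpa [mul_comm] using congrArg f (h a)

section

variable {K : Type} [Field K] {G : Type} [Group G] {act : G →* (K ≃+* K)}
  {V : Type} [AddCommGroup V] [Module K V] {ρ : G →* (V ≃+ V)}
  {hsemi : ∀ (g : G) (c : K) (v : V), ρ g (c • v) = act g c • ρ g v}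

@[simp]
theorem apply_coe_fixedSubmodule (g : G) (m : fixedSubmodule K G act V ρ hsemi) :
    ρ g m = m :=
  m.2 g

@[simp]
theorem natTensorMap_tmul (c : K) (m : fixedSubmodule K G act V ρ hsemi) :
    natTensorMap K G act V ρ hsemi (c ⊗ₜ m) = c • (m : V) :=
  TensorProduct.lift.tmul _ _

variable [Fintype G]

theorem eq_zero_of_forall_sum_act_smul_eq_zero
    (hfaithful : ∀ g : G, (∀ c : K, act g c = c) → g = 1)
    {W : Type*} [AddCommGroup W] [Module K W] {x : G → W}
    (h : ∀ a, ∑ g, act g a • x g = 0) : x = 0 := by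
  refine eq_zero_of_forall_sum_monoidHom_smul_eq_zero (χ := fun g => (act g : K →* K))
    (fun g g' hgg' => ?_) h
  have : g'⁻¹ * g = 1 := hfaithful _ fun c => by
    simpa [map_mul] using congrArg (act g'⁻¹) (DFunLike.congr_fun hgg' c)
  exact (inv_mul_eq_one.1 this).symm

variable (act) in
def fixedTrace (a : K) : fixedSubfield K G act :=
  ⟨∑ g, act g a, fun h => by
    rw [map_sum]
    exact Fintype.sum_equiv (Equiv.mulLeft h) _ _ fun g => by simp [map_mul]⟩

theorem eq_zero_of_forall_fixedTrace_mul_eq_zero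
    (hfaithful : ∀ g : G, (∀ c : K, act g c = c) → g = 1) {c : K}
    (h : ∀ a, fixedTrace act (a * c) = 0) : c = 0 := by
  have hx := eq_zero_of_forall_sum_act_smul_eq_zero hfaithful (x := fun g => act g c) fun a => by
    simpa [fixedTrace, map_mul] using congrArg Subtype.val (h a)
  simpa using congrFun hx 1

theorem sum_apply_mem_fixedSubmodule (v : V) :
    ∑ g, ρ g v ∈ fixedSubmodule K G act V ρ hsemi := fun h => by
  rw [map_sum]
  exact Fintype.sum_equiv (Equiv.mulLeft h) _ _ fun g => by simp

theorem span_fixedSubmodule_eq_top (hfaithful : ∀ g : G, (∀ c : K, act g c = c) → g = 1) :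
    Submodule.span K (fixedSubmodule K G act V ρ hsemi : Set V) = ⊤ := by
  set W := Submodule.span K (fixedSubmodule K G act V ρ hsemi : Set V)
  refine eq_top_iff.2 fun v _ => ?_
  have hx : (fun g => W.mkQ (ρ g v)) = 0 :=
    eq_zero_of_forall_sum_act_smul_eq_zero hfaithful fun a => by
      simp_rw [← map_smul, ← map_sum, ← hsemi]
      exact (Submodule.Quotient.mk_eq_zero W).2
        (Submodule.subset_span (sum_apply_mem_fixedSubmodule _))
  exact (Submodule.Quotient.mk_eq_zero W).1 (by simpa using congrFun hx 1)

theorem linearIndependent_of_linearIndependent_fixedSubfield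
    (hfaithful : ∀ g : G, (∀ c : K, act g c = c) → g = 1) {ι : Type*}
    {m : ι → fixedSubmodule K G act V ρ hsemi} (hm : LinearIndependent (fixedSubfield K G act) m) :
    LinearIndependent K fun i => (m i : V) := by
  classical
  refine linearIndependent_iff'.2 fun s c hc i hi =>
    eq_zero_of_forall_fixedTrace_mul_eq_zero hfaithful fun a => ?_
  refine linearIndependent_iff'.1 hm s (fun j => fixedTrace act (a * c j)) (Subtype.ext ?_) i hi
  calc ((∑ j ∈ s, fixedTrace act (a * c j) • m j : fixedSubmodule K G act V ρ hsemi) : V)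
      = ∑ j ∈ s, (∑ g, act g (a * c j)) • (m j : V) := by
        simp only [Submodule.coe_sum, Submodule.coe_smul_of_tower]; rfl
    _ = ∑ g, ∑ j ∈ s, act g (a * c j) • ρ g (m j) := by
        simp only [Finset.sum_smul, apply_coe_fixedSubmodule]; exact Finset.sum_comm
    _ = ∑ g, ρ g (a • ∑ j ∈ s, c j • (m j : V)) := by
        simp only [Finset.smul_sum, smul_smul, map_sum, hsemi, map_mul]
    _ = 0 := by rw [hc]; simp

end

/-- **Speiser's generalization of Hilbert's Theorem 90.**  Let `G` be a finite
group acting faithfully on a field `K` by field automorphisms (via `act`), and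
let `(V, ρ)` be a `K`-semilinear representation of `G` (`hsemi`).  Then the
natural map `K ⊗_{K^G} V^G → V`, `c ⊗ v ↦ c • v`, is bijective; in particular
`V` is spanned over `K` by its `G`-fixed vectors. -/
theorem hilbert90_speiser
    (K : Type) [Field K] (G : Type) [Group G] [Finite G]
    (act : G →* (K ≃+* K))
    (hfaithful : ∀ g : G, (∀ c : K, act g c = c) → g = 1)
    (V : Type) [AddCommGroup V] [Module K V]
    (ρ : G →* (V ≃+ V))
    (hsemi : ∀ (g : G) (c : K) (v : V), ρ g (c • v) = act g c • ρ g v) :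
    Function.Bijective (natTensorMap K G act V ρ hsemi) := by
  have := Fintype.ofFinite G
  classical
  let b := Module.Basis.ofVectorSpace (fixedSubfield K G act) (fixedSubmodule K G act V ρ hsemi)
  let e := TensorProduct.equivFinsuppOfBasisRight (M := K) b
  have hcomp : natTensorMap K G act V ρ hsemi ∘ e.symm =
      Finsupp.linearCombination K fun i => (b i : V) := by
    funext c
    simp [e, map_finsuppSum, Finsupp.linearCombination_apply]
  rw [← Function.Bijective.of_comp_iff _ e.symm.bijective, hcomp]
  refine ⟨linearIndependent_of_linearIndependent_fixedSubfield hfaithful b.linearIndependent, ?_⟩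
  rw [← LinearMap.range_eq_top, Finsupp.range_linearCombination]
  have hval : Set.range (fun i => (b i : V)) =
      (fixedSubmodule K G act V ρ hsemi).subtype '' Set.range b :=
    Set.range_comp _ _
  rw [← Submodule.span_span_of_tower (fixedSubfield K G act), hval, Submodule.span_image, b.span_eq,
    Submodule.map_subtype_top]
  exact span_fixedSubmodule_eq_top hfaithful
end
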